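/- arXiv:1501.07460 — 7 statements merged into one kernel-verified Lean document; each statement's English description precedes it below -/
import Mathlib

section
/- Let G be a connected multigraph with a spanning tree T. Then m(G) ≥ (β(G) − odd(G − E(T)))/2, where β(G) = |E(G)| − |V(G)| + 1 is the cycle rank, odd(G − E(T)) is the number of connected components of the cotree G − E(T) having an odd number of edges, and m(G) is the maximum number of disjoint pairs of adjacent edges whose removal leaves G connected. -/
/-- Two edges of a multigraph (given by its endpoint map `ends`) form a pair of
adjacent edges: they are distinct and share an endpoint. -/
def AdjPair {V E : Type} (ends : E → Sym2 V) (e f : E) : Prop :=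
  e ≠ f ∧ ∃ x, x ∈ ends e ∧ x ∈ ends f

/-- Reachability between vertices using only edges in `S`. -/
def reachOn {V E : Type} (ends : E → Sym2 V) (S : Set E) (a b : V) : Prop :=
  Relation.ReflTransGen (fun x y => ∃ e ∈ S, ends e = s(x, y)) a b

/-- The spanning subgraph with edge set `S` is connected (all vertices mutually reachable). -/
def ConnOn {V E : Type} (ends : E → Sym2 V) (S : Set E) : Prop :=
  ∀ a b : V, reachOn ends S a b

/-- The edges of `S` remaining after deleting all edges occurring in the pair set `P`. -/
def PairsRemoved {E : Type} (S : Set E) (P : Finset (E × E)) : Set E :=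
  {x ∈ S | ∀ p ∈ P, x ≠ p.1 ∧ x ≠ p.2}

/-- `P` is a set of pairwise disjoint pairs of adjacent edges of the (spanning) subgraph
with edge set `S` whose removal leaves a connected spanning subgraph. -/
def ValidOn {V E : Type} (ends : E → Sym2 V) (S : Set E) (P : Finset (E × E)) : Prop :=
  (∀ p ∈ P, p.1 ∈ S ∧ p.2 ∈ S ∧ AdjPair ends p.1 p.2) ∧
  (∀ p ∈ P, ∀ q ∈ P, p ≠ q → p.1 ≠ q.1 ∧ p.1 ≠ q.2 ∧ p.2 ≠ q.1 ∧ p.2 ≠ q.2) ∧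
  ConnOn ends (PairsRemoved S P)

/-- `m` of the subgraph with edge set `S`: the maximum number of pairwise disjoint pairs
of adjacent edges whose removal leaves a connected spanning subgraph. -/
noncomputable def maxPairsOn {V E : Type} (ends : E → Sym2 V) (S : Set E) : ℕ :=
  sSup {k | ∃ P : Finset (E × E), ValidOn ends S P ∧ P.card = k}

/-- A cycle (closed walk with no repeated vertices or edges; length 1 = loop,
length 2 = pair of parallel edges) using only edges from `S`. -/
structure CycleIn {V E : Type} (ends : E → Sym2 V) (S : Set E) where
  n : ℕ
  npos : 0 < n
  v : ZMod n → V
  e : ZMod n → E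
  vinj : Function.Injective v
  einj : Function.Injective e
  mem : ∀ i, e i ∈ S
  incid : ∀ i, ends (e i) = s(v i, v (i + 1))

/-- The number of connected components of the spanning subgraph with edge set `S`
containing an odd number of edges. -/
noncomputable def oddComp {V E : Type} (ends : E → Sym2 V) (S : Set E) : ℕ :=
  Nat.card {c : Quot (reachOn ends S) //
    Odd (Nat.card {e : E // e ∈ S ∧ ∀ x ∈ ends e, Quot.mk (reachOn ends S) x = c})}

set_option maxHeartbeats 1000000

attribute [local instance] Classical.propDecidable

namespace XAux

variable {V E : Type}

lemma sym2_decomp (z : Sym2 V) : ∃ a b, z = s(a, b) := by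
  induction z using Sym2.ind with
  | _ a b => exact ⟨a, b, rfl⟩

lemma sym2_mem_decomp {x : V} {z : Sym2 V} (h : x ∈ z) : ∃ y, z = s(x, y) := by
  obtain ⟨a, b, rfl⟩ := sym2_decomp z
  rcases Sym2.mem_iff.1 h with rfl | rfl
  · exact ⟨b, rfl⟩
  · exact ⟨a, Sym2.eq_swap⟩

lemma reachOn_mono (ends : E → Sym2 V) {S S' : Set E} (h : S ⊆ S') {a b : V}
    (hr : reachOn ends S a b) : reachOn ends S' a b :=
  Relation.ReflTransGen.mono (r := fun x y => ∃ e ∈ S, ends e = s(x, y))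
    (p := fun x y => ∃ e ∈ S', ends e = s(x, y)) (fun x y ⟨e, he, hx⟩ => ⟨e, h he, hx⟩) _ _ hr

lemma reachOn_symm (ends : E → Sym2 V) {S : Set E} {a b : V}
    (hr : reachOn ends S a b) : reachOn ends S b a :=
  (@Relation.ReflTransGen.stdSymm _ (fun x y => ∃ e ∈ S, ends e = s(x, y))
    ⟨fun x y ⟨e, he, hx⟩ => ⟨e, he, by rw [hx]; exact Sym2.eq_swap⟩⟩).symm _ _ hr

lemma reachOn_trans (ends : E → Sym2 V) {S : Set E} {a b c : V}
    (h1 : reachOn ends S a b) (h2 : reachOn ends S b c) : reachOn ends S a c :=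
  Relation.ReflTransGen.trans h1 h2

/-- reachability in exactly `n` steps -/
def kreach (ends : E → Sym2 V) (S : Set E) : ℕ → V → V → Prop
  | 0, a, b => a = b
  | n+1, a, b => ∃ c, (∃ e ∈ S, ends e = s(a, c)) ∧ kreach ends S n c b

lemma kreach_reach {ends : E → Sym2 V} {S : Set E} :
    ∀ {n : ℕ} {a b : V}, kreach ends S n a b → reachOn ends S a b := by
  intro n
  induction n with
  | zero => intro a b h; cases h; exact Relation.ReflTransGen.refl
  | succ n ih =>
    rintro a b ⟨c, hs, hk⟩
    exact Relation.ReflTransGen.head hs (ih hk)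

lemma kreach_snoc {ends : E → Sym2 V} {S : Set E} :
    ∀ {n : ℕ} {a b c : V}, kreach ends S n a b → (∃ e ∈ S, ends e = s(b, c)) →
      kreach ends S (n+1) a c := by
  intro n
  induction n with
  | zero => intro a b c h hs; cases h; exact ⟨c, hs, rfl⟩
  | succ n ih =>
    rintro a b c ⟨d, hs', hk⟩ hs
    exact ⟨d, hs', ih hk hs⟩

lemma reach_kreach {ends : E → Sym2 V} {S : Set E} {a b : V}
    (h : reachOn ends S a b) : ∃ n, kreach ends S n a b := by
  induction h with
  | refl => exact ⟨0, rfl⟩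
  | tail _ hstep ih =>
    obtain ⟨n, hn⟩ := ih
    exact ⟨n+1, kreach_snoc hn hstep⟩

variable (ends : E → Sym2 V) (F : Finset E) (w : V)

/-- distance to `w` within the edge set `F` -/
noncomputable def dd (x : V) : ℕ :=
  if h : ∃ n, kreach ends (↑F) n x w then Nat.find h else 0

variable {ends F w}

lemma dd_spec {x : V} (hx : reachOn ends (↑F) x w) :
    kreach ends (↑F) (dd ends F w x) x w := by
  have h := reach_kreach hx
  rw [dd, dif_pos h]
  exact Nat.find_spec h

lemma dd_le {x : V} {n : ℕ} (h : kreach ends (↑F) n x w) : dd ends F w x ≤ n := by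
  rw [dd, dif_pos ⟨n, h⟩]
  exact Nat.find_le h

lemma dd_self : dd ends F w w = 0 :=
  Nat.le_zero.1 (dd_le (show kreach ends (↑F) 0 w w from rfl))

lemma dd_eq_zero {x : V} (hx : reachOn ends (↑F) x w) (h : dd ends F w x = 0) : x = w := by
  have := dd_spec hx
  rw [h] at this
  exact this

lemma dd_step {x : V} (hx : reachOn ends (↑F) x w) (h : 0 < dd ends F w x) :
    ∃ e ∈ F, ∃ y, ends e = s(x, y) ∧ dd ends F w y + 1 = dd ends F w x ∧
      reachOn ends (↑F) y w := by
  have hs := dd_spec hx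
  obtain ⟨m, hm⟩ : ∃ m, dd ends F w x = m + 1 := ⟨dd ends F w x - 1, by omega⟩
  rw [hm] at hs
  obtain ⟨c, ⟨e, he, hee⟩, hk⟩ := hs
  have h1 : dd ends F w c ≤ m := dd_le hk
  have h2 : dd ends F w x ≤ dd ends F w c + 1 :=
    dd_le (⟨c, ⟨e, he, hee⟩, dd_spec (kreach_reach hk)⟩)
  exact ⟨e, he, c, hee, by omega, kreach_reach hk⟩

lemma dd_adj {x y : V} (h : ∃ e ∈ F, ends e = s(x, y)) (hy : reachOn ends (↑F) y w) :
    dd ends F w x ≤ dd ends F w y + 1 := by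
  obtain ⟨e, he, hee⟩ := h
  exact dd_le ⟨y, ⟨e, he, hee⟩, dd_spec hy⟩

variable (ends F w) in
/-- the set of "descending" edges usable from `x` on a canonical route to `w` -/
def Rt (x : V) : Set E :=
  {e | e ∈ F ∧ ∃ a b, ends e = s(a, b) ∧ dd ends F w b < dd ends F w a ∧
    (dd ends F w a < dd ends F w x ∨ a = x)}

lemma Rt_sub_F {x : V} : Rt ends F w x ⊆ (↑F : Set E) := fun _ h => h.1

lemma Rt_mono {x y : V} (h : dd ends F w y < dd ends F w x) :
    Rt ends F w y ⊆ Rt ends F w x := by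
  rintro e ⟨heF, a, b, hab, hba, hor⟩
  refine ⟨heF, a, b, hab, hba, Or.inl ?_⟩
  rcases hor with h' | rfl
  · omega
  · exact h

lemma route {x : V} (hx : reachOn ends (↑F) x w) :
    reachOn ends (Rt ends F w x) x w := by
  generalize hn : dd ends F w x = n
  induction n using Nat.strong_induction_on generalizing x with
  | _ n ih =>
    rcases Nat.eq_zero_or_pos n with rfl | hpos
    · rw [dd_eq_zero hx hn]; exact Relation.ReflTransGen.refl
    · obtain ⟨e, he, y, hee, hdy, hyw⟩ := dd_step hx (hn ▸ hpos)
      have hstep : ∃ e' ∈ Rt ends F w x, ends e' = s(x, y) :=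
        ⟨e, ⟨he, x, y, hee, by omega, Or.inr rfl⟩, hee⟩
      have hy : reachOn ends (Rt ends F w y) y w := ih (dd ends F w y) (by omega) hyw rfl
      exact Relation.ReflTransGen.head hstep
        (reachOn_mono ends (Rt_mono (by omega)) hy)


/-- The bundle of properties we establish for a pairing of the edge set `S`. -/
def Bundle (ends : E → Sym2 V) (S : Finset E) (P : Finset (E × E)) : Prop :=
  (∀ p ∈ P, p.1 ∈ S ∧ p.2 ∈ S ∧ AdjPair ends p.1 p.2) ∧
  (∀ p ∈ P, ∀ q ∈ P, p ≠ q → p.1 ≠ q.1 ∧ p.1 ≠ q.2 ∧ p.2 ≠ q.1 ∧ p.2 ≠ q.2) ∧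
  2 * P.card + S.card % 2 = S.card

lemma pairUp (ends : E → Sym2 V) (v : V) :
    ∀ (n : ℕ) (S : Finset E), S.card ≤ n → (∀ e ∈ S, v ∈ ends e) → Even S.card →
    ∃ P : Finset (E × E),
      (∀ p ∈ P, p.1 ∈ S ∧ p.2 ∈ S ∧ AdjPair ends p.1 p.2) ∧
      (∀ p ∈ P, ∀ q ∈ P, p ≠ q → p.1 ≠ q.1 ∧ p.1 ≠ q.2 ∧ p.2 ≠ q.1 ∧ p.2 ≠ q.2) ∧
      2 * P.card = S.card := by
  intro n
  induction n with
  | zero =>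
    intro S hS _ _
    refine ⟨∅, by simp, by simp, ?_⟩
    simp [Finset.card_eq_zero.1 (Nat.le_zero.1 hS)]
  | succ n ih =>
    intro S hS hv hev
    rcases S.eq_empty_or_nonempty with rfl | ⟨a, ha⟩
    · exact ⟨∅, by simp, by simp, by simp⟩
    · have hcard : 2 ≤ S.card := by
        rcases hev with ⟨k, hk⟩
        have : 0 < S.card := Finset.card_pos.2 ⟨a, ha⟩
        omega
      have hb : (S.erase a).Nonempty := by
        rw [← Finset.card_pos, Finset.card_erase_of_mem ha]; omega
      obtain ⟨b, hb⟩ := hb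
      have hba : b ≠ a := Finset.ne_of_mem_erase hb
      have hbS : b ∈ S := Finset.mem_of_mem_erase hb
      set S' := (S.erase a).erase b with hS'
      have hS'card : S'.card = S.card - 2 := by
        rw [hS', Finset.card_erase_of_mem hb, Finset.card_erase_of_mem ha]; omega
      have hS'sub : S' ⊆ S := fun x hx =>
        Finset.mem_of_mem_erase (Finset.mem_of_mem_erase hx)
      obtain ⟨P, hP1, hP2, hP3⟩ := ih S' (by omega) (fun e he => hv e (hS'sub he))
        (by rcases hev with ⟨k, hk⟩; rw [hS'card]; exact ⟨k - 1, by omega⟩)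
      have hnotmem : (a, b) ∉ P := by
        intro hmem
        have := (hP1 _ hmem).1
        simp only [hS'] at this
        exact (Finset.ne_of_mem_erase (Finset.mem_of_mem_erase this)) rfl
      refine ⟨insert (a, b) P, ?_, ?_, ?_⟩
      · intro p hp
        rcases Finset.mem_insert.1 hp with rfl | hp
        · exact ⟨ha, hbS, fun h => hba h.symm, v, hv a ha, hv b hbS⟩
        · exact ⟨hS'sub (hP1 p hp).1, hS'sub (hP1 p hp).2.1, (hP1 p hp).2.2⟩
      · intro p hp q hq hpq
        rcases Finset.mem_insert.1 hp with rfl | hp <;>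
          rcases Finset.mem_insert.1 hq with rfl | hq
        · exact absurd rfl hpq
        · have h1 := (hP1 q hq).1
          have h2 := (hP1 q hq).2.1
          simp only [hS'] at h1 h2
          refine ⟨fun h => ?_, fun h => ?_, fun h => ?_, fun h => ?_⟩
          · exact Finset.ne_of_mem_erase (Finset.mem_of_mem_erase (h ▸ h1)) rfl
          · exact Finset.ne_of_mem_erase (Finset.mem_of_mem_erase (h ▸ h2)) rfl
          · exact Finset.ne_of_mem_erase (h ▸ h1) rfl
          · exact Finset.ne_of_mem_erase (h ▸ h2) rfl
        · have h1 := (hP1 p hp).1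
          have h2 := (hP1 p hp).2.1
          simp only [hS'] at h1 h2
          refine ⟨fun h => ?_, fun h => ?_, fun h => ?_, fun h => ?_⟩
          · exact Finset.ne_of_mem_erase (Finset.mem_of_mem_erase (h ▸ h1)) rfl
          · exact Finset.ne_of_mem_erase (h ▸ h1) rfl
          · exact Finset.ne_of_mem_erase (Finset.mem_of_mem_erase (h ▸ h2)) rfl
          · exact Finset.ne_of_mem_erase (h ▸ h2) rfl
        · exact hP2 p hp q hq hpq
      · rw [Finset.card_insert_of_notMem hnotmem]
        omega

lemma bundle_combine {ends : E → Sym2 V} {K Frec F : Finset E}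
    (hdisj : Disjoint K Frec) (hun : F = K ∪ Frec)
    {P1 P2 : Finset (E × E)}
    (h1a : ∀ p ∈ P1, p.1 ∈ K ∧ p.2 ∈ K ∧ AdjPair ends p.1 p.2)
    (h1b : ∀ p ∈ P1, ∀ q ∈ P1, p ≠ q → p.1 ≠ q.1 ∧ p.1 ≠ q.2 ∧ p.2 ≠ q.1 ∧ p.2 ≠ q.2)
    (h1c : 2 * P1.card = K.card)
    (h2 : Bundle ends Frec P2) :
    Bundle ends F (P1 ∪ P2) := by
  obtain ⟨h2a, h2b, h2c⟩ := h2
  have hKF : K ⊆ F := hun ▸ Finset.subset_union_left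
  have hRF : Frec ⊆ F := hun ▸ Finset.subset_union_right
  have hcards : F.card = K.card + Frec.card := by
    rw [hun, Finset.card_union_of_disjoint hdisj]
  have hdisjKR : ∀ x, x ∈ K → x ∈ Frec → False := fun x h h' =>
    Finset.disjoint_left.1 hdisj h h'
  have hPdisj : Disjoint P1 P2 := by
    rw [Finset.disjoint_left]
    intro p hp1 hp2
    exact hdisjKR p.1 (h1a p hp1).1 (h2a p hp2).1
  constructor
  · intro p hp
    rcases Finset.mem_union.1 hp with hp | hp
    · exact ⟨hKF (h1a p hp).1, hKF (h1a p hp).2.1, (h1a p hp).2.2⟩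
    · exact ⟨hRF (h2a p hp).1, hRF (h2a p hp).2.1, (h2a p hp).2.2⟩
  constructor
  · intro p hp q hq hpq
    rcases Finset.mem_union.1 hp with hp | hp <;> rcases Finset.mem_union.1 hq with hq | hq
    · exact h1b p hp q hq hpq
    · refine ⟨fun h => ?_, fun h => ?_, fun h => ?_, fun h => ?_⟩
      · exact hdisjKR p.1 (h1a p hp).1 (h ▸ (h2a q hq).1)
      · exact hdisjKR p.1 (h1a p hp).1 (h ▸ (h2a q hq).2.1)
      · exact hdisjKR p.2 (h1a p hp).2.1 (h ▸ (h2a q hq).1)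
      · exact hdisjKR p.2 (h1a p hp).2.1 (h ▸ (h2a q hq).2.1)
    · refine ⟨fun h => ?_, fun h => ?_, fun h => ?_, fun h => ?_⟩
      · exact hdisjKR q.1 (h1a q hq).1 (h ▸ (h2a p hp).1)
      · exact hdisjKR q.2 (h1a q hq).2.1 (h ▸ (h2a p hp).1)
      · exact hdisjKR q.1 (h1a q hq).1 (h ▸ (h2a p hp).2.1)
      · exact hdisjKR q.2 (h1a q hq).2.1 (h ▸ (h2a p hp).2.1)
    · exact h2b p hp q hq hpq
  · rw [Finset.card_union_of_disjoint hPdisj]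
    have hKeven : K.card % 2 = 0 := by omega
    omega


def touch (ends : E → Sym2 V) (F : Finset E) (x : V) : Prop := ∃ e ∈ F, x ∈ ends e

noncomputable def Exx (ends : E → Sym2 V) (F : Finset E) (x : V) : Finset E :=
  F.filter (fun e => x ∈ ends e)

lemma mem_Exx {ends : E → Sym2 V} {F : Finset E} {x : V} {e : E} :
    e ∈ Exx ends F x ↔ e ∈ F ∧ x ∈ ends e := Finset.mem_filter

lemma pair_main (ends : E → Sym2 V) [Fintype V] :
    ∀ (N : ℕ) (F : Finset E), F.card ≤ N →
    (∀ a b, touch ends F a → touch ends F b → reachOn ends (↑F) a b) →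
    ∃ P, Bundle ends F P := by
  intro N
  induction N with
  | zero =>
    intro F hF _
    have : F = ∅ := Finset.card_eq_zero.1 (Nat.le_zero.1 hF)
    subst this
    exact ⟨∅, by simp, by simp, by simp⟩
  | succ N ih =>
    intro F hFcard hconn
    rcases F.eq_empty_or_nonempty with rfl | ⟨e₀, he₀⟩
    · exact ⟨∅, by simp, by simp, by simp⟩
    obtain ⟨w, b₀, he₀end⟩ := sym2_decomp (ends e₀)
    have htw : touch ends F w := ⟨e₀, he₀, by rw [he₀end]; exact Sym2.mem_mk_left _ _⟩
    have hreach : ∀ x, touch ends F x → reachOn ends (↑F) x w :=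
      fun x hx => hconn x w hx htw
    obtain ⟨v₀, hv₀, hmax⟩ := Finset.exists_max_image
      (Finset.univ.filter (fun x => touch ends F x)) (dd ends F w)
      ⟨w, by simp [htw]⟩
    set D := dd ends F w v₀ with hDdef
    have hDmax : ∀ x, touch ends F x → dd ends F w x ≤ D :=
      fun x hx => hmax x (by simp [hx])
    by_cases hD0 : D = 0
    · -- all edges are loops at w
      have hall : ∀ e ∈ F, w ∈ ends e := by
        intro e he
        obtain ⟨a, b, hab⟩ := sym2_decomp (ends e)
        have hta : touch ends F a := ⟨e, he, by rw [hab]; exact Sym2.mem_mk_left _ _⟩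
        have : dd ends F w a = 0 := by have := hDmax a hta; omega
        have haw : a = w := dd_eq_zero (hreach a hta) this
        rw [hab, ← haw]
        exact Sym2.mem_mk_left _ _
      by_cases hev : Even F.card
      · obtain ⟨P, h1, h2, h3⟩ := pairUp ends w F.card F le_rfl hall hev
        have : F.card % 2 = 0 := Nat.even_iff.1 hev
        exact ⟨P, h1, h2, by omega⟩
      · obtain ⟨P, h1, h2, h3⟩ := pairUp ends w F.card (F.erase e₀)
          (by rw [Finset.card_erase_of_mem he₀]; omega)
          (fun e he => hall e (Finset.mem_of_mem_erase he))
          (by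
            have h1 : F.card % 2 = 1 := Nat.not_even_iff.1 hev
            have h2 : 0 < F.card := Finset.card_pos.2 ⟨e₀, he₀⟩
            rw [Nat.even_iff, Finset.card_erase_of_mem he₀]
            omega)
        have hc : F.card % 2 = 1 := Nat.not_even_iff.1 hev
        have h0 : 0 < F.card := Finset.card_pos.2 ⟨e₀, he₀⟩
        rw [Finset.card_erase_of_mem he₀] at h3
        refine ⟨P, ?_, h2, by omega⟩
        intro p hp
        exact ⟨Finset.mem_of_mem_erase (h1 p hp).1,
          Finset.mem_of_mem_erase (h1 p hp).2.1, (h1 p hp).2.2⟩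
    · have hDpos : 0 < D := Nat.pos_of_ne_zero hD0
      by_cases hA : ∃ x, touch ends F x ∧ dd ends F w x = D ∧ 2 ≤ (Exx ends F x).card
      · -- case (a): a deepest vertex with at least two incident edges
        obtain ⟨v, htv, hdv, h2v⟩ := hA
        obtain ⟨g, hgF, w₁, hg_end, hw₁d, hw₁r⟩ := dd_step (hreach v htv) (by omega)
        have hgEv : g ∈ Exx ends F v :=
          mem_Exx.2 ⟨hgF, by rw [hg_end]; exact Sym2.mem_mk_left _ _⟩
        have claimRt : ∀ x, touch ends F x → x ≠ v →
            ∀ e ∈ Rt ends F w x, e ∉ Exx ends F v := by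
          rintro x htx hxv e ⟨heF, a, b, hab, hba, hor⟩ hEv
          have hvmem : v ∈ ends e := (mem_Exx.1 hEv).2
          have hta : touch ends F a := ⟨e, heF, by rw [hab]; exact Sym2.mem_mk_left _ _⟩
          have htb : touch ends F b := ⟨e, heF, by rw [hab]; exact Sym2.mem_mk_right _ _⟩
          have hdx : dd ends F w x ≤ D := hDmax x htx
          have hda : dd ends F w a ≤ D := hDmax a hta
          rw [hab, Sym2.mem_iff] at hvmem
          rcases hvmem with rfl | rfl
          · rcases hor with h' | rfl
            · omega
            · exact hxv rfl
          · omega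
        by_cases hEvEven : Even (Exx ends F v).card
        · -- remove the whole star at v
          set Frec := F \ Exx ends F v with hFrec
          have hsub : Frec ⊆ F := Finset.sdiff_subset
          have hkey : ∀ x, touch ends Frec x → reachOn ends (↑Frec) x w := by
            rintro x ⟨e, he, hx⟩
            have heF : e ∈ F := hsub he
            have htx : touch ends F x := ⟨e, heF, hx⟩
            have hxv : x ≠ v := by
              rintro rfl
              exact (Finset.mem_sdiff.1 he).2 (mem_Exx.2 ⟨heF, hx⟩)
            refine reachOn_mono ends ?_ (route (hreach x htx))
            intro e' he'
            have := claimRt x htx hxv e' he'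
            exact Finset.mem_coe.2 (Finset.mem_sdiff.2 ⟨he'.1, this⟩)
          have hconnrec : ∀ a b, touch ends Frec a → touch ends Frec b →
              reachOn ends (↑Frec) a b :=
            fun a b ha hb => reachOn_trans ends (hkey a ha) (reachOn_symm ends (hkey b hb))
          have hEvsub : Exx ends F v ⊆ F := Finset.filter_subset _ _
          have hcardrec : Frec.card ≤ N := by
            have h1 : Frec.card = F.card - (Exx ends F v).card :=
              Finset.card_sdiff_of_subset hEvsub
            omega
          obtain ⟨P2, hP2⟩ := ih Frec hcardrec hconnrec
          obtain ⟨P1, h1a, h1b, h1c⟩ := pairUp ends v (Exx ends F v).card (Exx ends F v)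
            le_rfl (fun e he => (mem_Exx.1 he).2) hEvEven
          exact ⟨_, bundle_combine Finset.sdiff_disjoint.symm
            (Finset.union_sdiff_of_subset hEvsub).symm h1a h1b h1c hP2⟩
        · -- |Ev| odd : keep the descending edge g
          set K := (Exx ends F v).erase g with hK
          set Frec := (F \ Exx ends F v) ∪ {g} with hFrec
          have hEvsub : Exx ends F v ⊆ F := Finset.filter_subset _ _
          have hgFrec : g ∈ Frec := Finset.mem_union_right _ (Finset.mem_singleton_self g)
          have hsub : Frec ⊆ F := by
            intro e he
            rcases Finset.mem_union.1 he with he | he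
            · exact (Finset.mem_sdiff.1 he).1
            · rw [Finset.mem_singleton.1 he]; exact hgF
          have hdisj : Disjoint K Frec := by
            rw [Finset.disjoint_left]
            intro e heK heR
            have h1 := Finset.mem_of_mem_erase heK
            have h2 := Finset.ne_of_mem_erase heK
            rcases Finset.mem_union.1 heR with he | he
            · exact (Finset.mem_sdiff.1 he).2 h1
            · exact h2 (Finset.mem_singleton.1 he)
          have hun : F = K ∪ Frec := by
            ext e
            simp only [hK, hFrec, Finset.mem_union, Finset.mem_erase, Finset.mem_sdiff,
              Finset.mem_singleton]
            constructor
            · intro he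
              by_cases hg' : e = g
              · exact Or.inr (Or.inr hg')
              · by_cases hEv : e ∈ Exx ends F v
                · exact Or.inl ⟨hg', hEv⟩
                · exact Or.inr (Or.inl ⟨he, hEv⟩)
            · rintro (⟨_, hEv⟩ | ⟨hF', _⟩ | rfl)
              · exact hEvsub hEv
              · exact hF'
              · exact hgF
          have hw₁v : w₁ ≠ v := by
            intro h
            rw [h] at hw₁d
            omega
          have htw₁ : touch ends F w₁ :=
            ⟨g, hgF, by rw [hg_end]; exact Sym2.mem_mk_right _ _⟩
          have hkey : ∀ x, touch ends Frec x → reachOn ends (↑Frec) x w := by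
            rintro x ⟨e, he, hx⟩
            have heF : e ∈ F := hsub he
            have htx : touch ends F x := ⟨e, heF, hx⟩
            by_cases hxv : x = v
            · subst hxv
              refine Relation.ReflTransGen.head ⟨g, hgFrec, hg_end⟩ ?_
              refine reachOn_mono ends ?_ (route hw₁r)
              intro e' he'
              have := claimRt w₁ htw₁ hw₁v e' he'
              exact Finset.mem_coe.2 (Finset.mem_union_left _
                (Finset.mem_sdiff.2 ⟨he'.1, this⟩))
            · refine reachOn_mono ends ?_ (route (hreach x htx))
              intro e' he'
              have := claimRt x htx hxv e' he'
              exact Finset.mem_coe.2 (Finset.mem_union_left _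
                (Finset.mem_sdiff.2 ⟨he'.1, this⟩))
          have hconnrec : ∀ a b, touch ends Frec a → touch ends Frec b →
              reachOn ends (↑Frec) a b :=
            fun a b ha hb => reachOn_trans ends (hkey a ha) (reachOn_symm ends (hkey b hb))
          have hcardrec : Frec.card ≤ N := by
            have h1 : (F \ Exx ends F v).card = F.card - (Exx ends F v).card :=
              Finset.card_sdiff_of_subset hEvsub
            have h2 : Frec.card ≤ (F \ Exx ends F v).card + 1 := by
              rw [hFrec]
              exact le_trans (Finset.card_union_le _ _) (by simp)
            have h3 : (Exx ends F v).card ≤ F.card := Finset.card_le_card hEvsub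
            omega
          obtain ⟨P2, hP2⟩ := ih Frec hcardrec hconnrec
          obtain ⟨P1, h1a, h1b, h1c⟩ := pairUp ends v K.card K le_rfl
            (fun e he => (mem_Exx.1 (Finset.mem_of_mem_erase he)).2)
            (by
              rw [Nat.even_iff, hK, Finset.card_erase_of_mem hgEv]
              have := Nat.not_even_iff.1 hEvEven
              have : 0 < (Exx ends F v).card := Finset.card_pos.2 ⟨g, hgEv⟩
              have h' := Nat.not_even_iff.1 hEvEven
              omega)
          exact ⟨_, bundle_combine hdisj hun h1a h1b h1c hP2⟩
      · -- case (b): every deepest vertex is pendant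
        push_neg at hA
        have hpend : ∀ x, touch ends F x → dd ends F w x = D →
            ∀ e1 ∈ Exx ends F x, ∀ e2 ∈ Exx ends F x, e1 = e2 := by
          intro x htx hdx e1 h1 e2 h2
          have := hA x htx hdx
          exact Finset.card_le_one.1 (by omega) e1 h1 e2 h2
        set v := v₀ with hv
        have htv : touch ends F v := by
          have := Finset.mem_filter.1 hv₀
          exact this.2
        have hdv : dd ends F w v = D := rfl
        obtain ⟨g, hgF, u, hg_end, hud, hur⟩ := dd_step (hreach v htv) (by omega)
        have hgEv : g ∈ Exx ends F v :=
          mem_Exx.2 ⟨hgF, by rw [hg_end]; exact Sym2.mem_mk_left _ _⟩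
        have hEvg : ∀ e ∈ Exx ends F v, e = g := fun e he => hpend v htv hdv e he g hgEv
        have huv : u ≠ v := by
          intro h
          rw [h, hdv] at hud
          omega
        have hgEu : g ∈ Exx ends F u :=
          mem_Exx.2 ⟨hgF, by rw [hg_end]; exact Sym2.mem_mk_right _ _⟩
        have htu : touch ends F u := ⟨g, hgF, (mem_Exx.1 hgEu).2⟩
        by_cases hf : ∃ f ∈ Exx ends F u, f ≠ g ∧ ∀ z, ends f = s(u, z) →
            dd ends F w u ≤ dd ends F w z
        · -- case (b1): a non-ascending edge f at u : pair (g, f)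
          obtain ⟨f, hfEu, hfg, hfnon⟩ := hf
          have hfF : f ∈ F := (mem_Exx.1 hfEu).1
          obtain ⟨y, hfy⟩ := sym2_mem_decomp (mem_Exx.1 hfEu).2
          have hyd : dd ends F w u ≤ dd ends F w y := hfnon y hfy
          have htyF : touch ends F y := ⟨f, hfF, by rw [hfy]; exact Sym2.mem_mk_right _ _⟩
          have hydle : dd ends F w y ≤ D := hDmax y htyF
          have hyadj : dd ends F w y ≤ dd ends F w u + 1 :=
            dd_adj ⟨f, hfF, by rw [hfy]; exact Sym2.eq_swap⟩ hur
          have hycase : dd ends F w y = dd ends F w u ∨ dd ends F w y = D := by omega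
          set K : Finset E := {g, f} with hKdef
          have hgf : g ≠ f := fun h => hfg h.symm
          have hKsub : K ⊆ F := by
            intro e he
            rcases Finset.mem_insert.1 he with rfl | he
            · exact hgF
            · rw [Finset.mem_singleton.1 he]; exact hfF
          have hKcard : K.card = 2 := by
            rw [hKdef, Finset.card_insert_of_notMem (by simp [hgf]), Finset.card_singleton]
          set Frec := F \ K with hFrec
          have hsub : Frec ⊆ F := Finset.sdiff_subset
          have claim : ∀ p, touch ends F p → dd ends F w p < D →
              Rt ends F w p ⊆ (↑Frec : Set E) := by
            rintro p htp hdp e ⟨heF, a, b, hab, hba, hor⟩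
            refine Finset.mem_coe.2 (Finset.mem_sdiff.2 ⟨heF, ?_⟩)
            intro heK
            rcases Finset.mem_insert.1 heK with rfl | heK
            · rw [hg_end] at hab
              rcases Sym2.eq_iff.1 hab with ⟨rfl, rfl⟩ | ⟨rfl, rfl⟩
              · rcases hor with h' | rfl
                · omega
                · omega
              · omega
            · obtain rfl := Finset.mem_singleton.1 heK
              rw [hfy] at hab
              rcases Sym2.eq_iff.1 hab.symm with ⟨h1, h2⟩ | ⟨h1, h2⟩
              · rw [h1, h2] at hba
                omega
              · rw [h1, h2] at hba
                rw [h1] at hor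
                have hyD : dd ends F w y = D := by rcases hycase with h' | h' <;> omega
                rcases hor with h' | h'
                · omega
                · rw [h'] at hyD; omega
          have hkey : ∀ x, touch ends Frec x → reachOn ends (↑Frec) x w := by
            rintro x ⟨e, he, hx⟩
            have heF : e ∈ F := hsub he
            have htx : touch ends F x := ⟨e, heF, hx⟩
            have hxv : x ≠ v := by
              rintro rfl
              have : e ∈ Exx ends F v := mem_Exx.2 ⟨heF, hx⟩
              have := hEvg e this
              subst this
              exact (Finset.mem_sdiff.1 he).2 (Finset.mem_insert_self _ _)
            by_cases hxD : dd ends F w x = D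
            · -- x is a pendant deepest vertex
              have hxny : x ≠ y := by
                rcases hycase with hy1 | hy2
                · intro h; rw [h] at hxD; omega
                · intro h
                  subst h
                  have hfEx : f ∈ Exx ends F x :=
                    mem_Exx.2 ⟨hfF, by rw [hfy]; exact Sym2.mem_mk_right _ _⟩
                  have : e ∈ Exx ends F x := mem_Exx.2 ⟨heF, hx⟩
                  have := hpend x htx hxD e this f hfEx
                  subst this
                  exact (Finset.mem_sdiff.1 he).2 (by simp [hKdef])
              obtain ⟨ex, hexF, p, hex_end, hpd, hpr⟩ :=
                dd_step (hreach x htx) (by omega)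
              have htp : touch ends F p :=
                ⟨ex, hexF, by rw [hex_end]; exact Sym2.mem_mk_right _ _⟩
              have hexg : ex ≠ g := by
                intro h
                rw [h, hg_end] at hex_end
                rcases Sym2.eq_iff.1 hex_end with ⟨h1, h2⟩ | ⟨h1, h2⟩
                · exact hxv h1.symm
                · rw [← h2] at hxD; omega
              have hexf : ex ≠ f := by
                intro h
                rw [h, hfy] at hex_end
                rcases Sym2.eq_iff.1 hex_end with ⟨h1, h2⟩ | ⟨h1, h2⟩
                · rw [← h1] at hxD; omega
                · exact hxny h2.symm
              have hexFrec : ex ∈ Frec := Finset.mem_sdiff.2 ⟨hexF, by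
                intro hK'
                rcases Finset.mem_insert.1 hK' with rfl | hK'
                · exact hexg rfl
                · exact hexf (Finset.mem_singleton.1 hK')⟩
              refine Relation.ReflTransGen.head ⟨ex, Finset.mem_coe.2 hexFrec, hex_end⟩ ?_
              exact reachOn_mono ends (claim p htp (by omega)) (route hpr)
            · have hdx : dd ends F w x ≤ D := hDmax x htx
              exact reachOn_mono ends (claim x htx (by omega)) (route (hreach x htx))
          have hconnrec : ∀ a b, touch ends Frec a → touch ends Frec b →
              reachOn ends (↑Frec) a b :=
            fun a b ha hb => reachOn_trans ends (hkey a ha) (reachOn_symm ends (hkey b hb))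
          have hcardrec : Frec.card ≤ N := by
            have h1 : Frec.card = F.card - K.card := Finset.card_sdiff_of_subset hKsub
            have h2 : K.card ≤ F.card := Finset.card_le_card hKsub
            omega
          obtain ⟨P2, hP2⟩ := ih Frec hcardrec hconnrec
          refine ⟨_, bundle_combine Finset.sdiff_disjoint.symm
            (Finset.union_sdiff_of_subset hKsub).symm
            (P1 := {(g, f)}) ?_ ?_ ?_ hP2⟩
          · intro p hp
            rw [Finset.mem_singleton.1 hp]
            refine ⟨Finset.mem_insert_self _ _, by simp [hKdef], hgf, u, ?_, ?_⟩
            · rw [hg_end]; exact Sym2.mem_mk_right _ _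
            · rw [hfy]; exact Sym2.mem_mk_left _ _
          · intro p hp q hq hpq
            rw [Finset.mem_singleton.1 hp, Finset.mem_singleton.1 hq] at hpq
            exact absurd rfl hpq
          · rw [Finset.card_singleton, hKcard]
        · by_cases hf2 : ∃ f ∈ Exx ends F u, f ≠ g
          · -- case (b2): all other edges at u ascend; pair (g, h)
            push_neg at hf
            have hup : ∀ e' ∈ Exx ends F u, e' ≠ g →
                ∃ z, ends e' = s(u, z) ∧ dd ends F w z < dd ends F w u := by
              intro e' he' hne
              have := hf e' he' hne
              exact this
            obtain ⟨h, hhEu, hhg⟩ := hf2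
            have hhF : h ∈ F := (mem_Exx.1 hhEu).1
            obtain ⟨z, hz_end, hzlt⟩ := hup h hhEu hhg
            set K : Finset E := {g, h} with hKdef
            have hgh : g ≠ h := fun h' => hhg h'.symm
            have hKsub : K ⊆ F := by
              intro e he
              rcases Finset.mem_insert.1 he with rfl | he
              · exact hgF
              · rw [Finset.mem_singleton.1 he]; exact hhF
            have hKcard : K.card = 2 := by
              rw [hKdef, Finset.card_insert_of_notMem (by simp [hgh]), Finset.card_singleton]
            set Frec := F \ K with hFrec
            have hsub : Frec ⊆ F := Finset.sdiff_subset
            have claim : ∀ p, touch ends F p → dd ends F w p < D → p ≠ u →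
                Rt ends F w p ⊆ (↑Frec : Set E) := by
              rintro p htp hdp hpu e ⟨heF, a, b, hab, hba, hor⟩
              refine Finset.mem_coe.2 (Finset.mem_sdiff.2 ⟨heF, ?_⟩)
              intro heK
              rcases Finset.mem_insert.1 heK with rfl | heK
              · rw [hg_end] at hab
                rcases Sym2.eq_iff.1 hab with ⟨rfl, rfl⟩ | ⟨rfl, rfl⟩
                · rcases hor with h' | rfl
                  · omega
                  · omega
                · omega
              · obtain rfl := Finset.mem_singleton.1 heK
                rw [hz_end] at hab
                rcases Sym2.eq_iff.1 hab.symm with ⟨h1, h2⟩ | ⟨h1, h2⟩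
                · rw [h1] at hor
                  rcases hor with h' | h'
                  · omega
                  · exact hpu h'.symm
                · rw [h1, h2] at hba
                  omega
            have hkey : ∀ x, touch ends Frec x → reachOn ends (↑Frec) x w := by
              rintro x ⟨e, he, hx⟩
              have heF : e ∈ F := hsub he
              have htx : touch ends F x := ⟨e, heF, hx⟩
              have hxv : x ≠ v := by
                rintro rfl
                have : e ∈ Exx ends F v := mem_Exx.2 ⟨heF, hx⟩
                have := hEvg e this
                subst this
                exact (Finset.mem_sdiff.1 he).2 (Finset.mem_insert_self _ _)
              by_cases hxu : x = u
              · have heEu : e ∈ Exx ends F u :=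
                  mem_Exx.2 ⟨heF, by rw [← hxu]; exact hx⟩
                have heg : e ≠ g := by
                  intro h'
                  exact (Finset.mem_sdiff.1 he).2 (h' ▸ Finset.mem_insert_self _ _)
                obtain ⟨z₂, hz₂_end, hz₂lt⟩ := hup e heEu heg
                have htz₂ : touch ends F z₂ :=
                  ⟨e, heF, by rw [hz₂_end]; exact Sym2.mem_mk_right _ _⟩
                have hz₂u : z₂ ≠ u := by intro h'; rw [h'] at hz₂lt; omega
                refine Relation.ReflTransGen.head
                  ⟨e, Finset.mem_coe.2 he, by rw [hxu]; exact hz₂_end⟩ ?_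
                exact reachOn_mono ends (claim z₂ htz₂ (by omega) hz₂u)
                  (route (hreach z₂ htz₂))
              · by_cases hxD : dd ends F w x = D
                · obtain ⟨ex, hexF, p, hex_end, hpd, hpr⟩ :=
                    dd_step (hreach x htx) (by omega)
                  have htp : touch ends F p :=
                    ⟨ex, hexF, by rw [hex_end]; exact Sym2.mem_mk_right _ _⟩
                  have hexg : ex ≠ g := by
                    intro h'
                    rw [h', hg_end] at hex_end
                    rcases Sym2.eq_iff.1 hex_end with ⟨h1, h2⟩ | ⟨h1, h2⟩
                    · exact hxv h1.symm
                    · exact hxu h2.symm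
                  have hexh : ex ≠ h := by
                    intro h'
                    rw [h', hz_end] at hex_end
                    rcases Sym2.eq_iff.1 hex_end with ⟨h1, h2⟩ | ⟨h1, h2⟩
                    · exact hxu h1.symm
                    · rw [← h2] at hxD; omega
                  have hpu : p ≠ u := by
                    intro h'
                    have hexEu : ex ∈ Exx ends F u :=
                      mem_Exx.2 ⟨hexF, by
                        rw [hex_end, ← h']; exact Sym2.mem_mk_right _ _⟩
                    obtain ⟨z', hz'_end, hz'lt⟩ := hup ex hexEu hexg
                    rw [hex_end, h'] at hz'_end
                    rcases Sym2.eq_iff.1 hz'_end with ⟨h1, h2⟩ | ⟨h1, h2⟩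
                    · exact hxu h1
                    · rw [← h1] at hz'lt
                      omega
                  have hexFrec : ex ∈ Frec := Finset.mem_sdiff.2 ⟨hexF, by
                    intro hK'
                    rcases Finset.mem_insert.1 hK' with rfl | hK'
                    · exact hexg rfl
                    · exact hexh (Finset.mem_singleton.1 hK')⟩
                  refine Relation.ReflTransGen.head
                    ⟨ex, Finset.mem_coe.2 hexFrec, hex_end⟩ ?_
                  exact reachOn_mono ends (claim p htp (by omega) hpu) (route hpr)
                · have hdx : dd ends F w x ≤ D := hDmax x htx
                  exact reachOn_mono ends (claim x htx (by omega) hxu)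
                    (route (hreach x htx))
            have hconnrec : ∀ a b, touch ends Frec a → touch ends Frec b →
                reachOn ends (↑Frec) a b :=
              fun a b ha hb =>
                reachOn_trans ends (hkey a ha) (reachOn_symm ends (hkey b hb))
            have hcardrec : Frec.card ≤ N := by
              have h1 : Frec.card = F.card - K.card := Finset.card_sdiff_of_subset hKsub
              have h2 : K.card ≤ F.card := Finset.card_le_card hKsub
              omega
            obtain ⟨P2, hP2⟩ := ih Frec hcardrec hconnrec
            refine ⟨_, bundle_combine Finset.sdiff_disjoint.symm
              (Finset.union_sdiff_of_subset hKsub).symm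
              (P1 := {(g, h)}) ?_ ?_ ?_ hP2⟩
            · intro p hp
              rw [Finset.mem_singleton.1 hp]
              refine ⟨Finset.mem_insert_self _ _, by simp [hKdef], hgh, u, ?_, ?_⟩
              · rw [hg_end]; exact Sym2.mem_mk_right _ _
              · rw [hz_end]; exact Sym2.mem_mk_left _ _
            · intro p hp q hq hpq
              rw [Finset.mem_singleton.1 hp, Finset.mem_singleton.1 hq] at hpq
              exact absurd rfl hpq
            · rw [Finset.card_singleton, hKcard]
          · -- case (b3): F = {g}
            push_neg at hf2
            have hEug : ∀ e ∈ Exx ends F u, e = g := hf2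
            have hD1 : D = 1 := by
              by_contra hD1
              have hD2 : 2 ≤ D := by omega
              obtain ⟨e', he'F, z', hz'_end, hz'd, _⟩ :=
                dd_step hur (by omega)
              have : e' ∈ Exx ends F u :=
                mem_Exx.2 ⟨he'F, by rw [hz'_end]; exact Sym2.mem_mk_left _ _⟩
              have he'g := hEug e' this
              rw [he'g, hg_end] at hz'_end
              rcases Sym2.eq_iff.1 hz'_end with ⟨h1, h2⟩ | ⟨h1, h2⟩
              · exact huv h1.symm
              · rw [← h1] at hz'd
                omega
            have hduz : dd ends F w u = 0 := by omega
            have huw : u = w := dd_eq_zero hur hduz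
            have hFg : ∀ e ∈ F, e = g := by
              intro e he
              by_contra hne
              obtain ⟨a, b, hab⟩ := sym2_decomp (ends e)
              have hv_not : v ∉ ends e := by
                intro h'
                exact hne (hEvg e (mem_Exx.2 ⟨he, h'⟩))
              have hu_not : u ∉ ends e := by
                intro h'
                exact hne (hEug e (mem_Exx.2 ⟨he, h'⟩))
              have hta : touch ends F a := ⟨e, he, by rw [hab]; exact Sym2.mem_mk_left _ _⟩
              have hanu : a ≠ u := by
                intro h'
                exact hu_not (by rw [hab, ← h']; exact Sym2.mem_mk_left _ _)
              have hda : dd ends F w a ≤ D := hDmax a hta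
              have hda1 : dd ends F w a = 1 := by
                rcases Nat.eq_zero_or_pos (dd ends F w a) with h' | h'
                · exact absurd (dd_eq_zero (hreach a hta) h') (huw ▸ hanu)
                · omega
              obtain ⟨e'', he''F, z'', hz''_end, hz''d, hz''r⟩ :=
                dd_step (hreach a hta) (by omega)
              have hz''0 : dd ends F w z'' = 0 := by omega
              have hz''w : z'' = w := dd_eq_zero hz''r hz''0
              have : e'' ∈ Exx ends F u := by
                rw [huw]
                exact mem_Exx.2 ⟨he''F, by rw [hz''_end, hz''w]; exact Sym2.mem_mk_right _ _⟩
              have he''g := hEug e'' this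
              rw [he''g, hg_end] at hz''_end
              rcases Sym2.eq_iff.1 hz''_end with ⟨h1, h2⟩ | ⟨h1, h2⟩
              · exact hv_not (by rw [hab, h1]; exact Sym2.mem_mk_left _ _)
              · exact hu_not (by rw [hab, h2]; exact Sym2.mem_mk_left _ _)
            have hFsing : F = {g} := by
              apply Finset.eq_singleton_iff_unique_mem.2
              exact ⟨hgF, hFg⟩
            refine ⟨∅, by simp, by simp, ?_⟩
            rw [hFsing]
            simp


lemma reach_in_class (ends : E → Sym2 V) (S : Set E) {a b : V}
    (h : reachOn ends S a b) :
    reachOn ends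
      {e | e ∈ S ∧ ∀ z ∈ ends e, Quot.mk (reachOn ends S) z = Quot.mk (reachOn ends S) a}
      a b := by
  induction h with
  | refl => exact Relation.ReflTransGen.refl
  | tail h1 h2 ih =>
    obtain ⟨e, heS, hend⟩ := h2
    refine ih.tail ⟨e, ⟨heS, ?_⟩, hend⟩
    intro z hz
    rw [hend, Sym2.mem_iff] at hz
    rcases hz with rfl | rfl
    · exact Quot.sound (reachOn_symm ends h1)
    · exact Quot.sound (reachOn_symm ends (h1.tail ⟨e, heS, hend⟩))

lemma reach_endpoints (ends : E → Sym2 V) {S : Set E} {e : E} (he : e ∈ S)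
    {x y : V} (hx : x ∈ ends e) (hy : y ∈ ends e) : reachOn ends S x y := by
  obtain ⟨a, b, hab⟩ := sym2_decomp (ends e)
  have hstep : reachOn ends S a b := Relation.ReflTransGen.single ⟨e, he, hab⟩
  rw [hab, Sym2.mem_iff] at hx hy
  rcases hx with rfl | rfl <;> rcases hy with rfl | rfl
  · exact Relation.ReflTransGen.refl
  · exact hstep
  · exact reachOn_symm ends hstep
  · exact Relation.ReflTransGen.refl

end XAux

open XAux in
/-- Xuong lower bound: for any spanning tree `T`,
`m(G) ≥ (β(G) − odd(G − E(T)))/2`. -/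
theorem xuong_lower_bound {V E : Type} [Fintype V] [Fintype E]
    (ends : E → Sym2 V) (hG : ConnOn ends Set.univ) (T : Finset E)
    (hTconn : ConnOn ends (↑T : Set E))
    (hTcard : T.card + 1 = Fintype.card V) :
    Fintype.card E + 1 - Fintype.card V - oddComp ends ((↑T : Set E)ᶜ) ≤
      2 * maxPairsOn ends Set.univ := by
  classical
  set S : Set E := (↑T : Set E)ᶜ with hSdef
  have hequiv : Equivalence (reachOn ends S) :=
    ⟨fun _ => Relation.ReflTransGen.refl, fun h => reachOn_symm ends h,
      fun h1 h2 => reachOn_trans ends h1 h2⟩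
  have hq : ∀ a b : V, Quot.mk (reachOn ends S) a = Quot.mk (reachOn ends S) b ↔
      reachOn ends S a b := by
    intro a b
    rw [Quot.eq]
    exact hequiv.eqvGen_iff
  haveI : Finite (Quot (reachOn ends S)) :=
    Finite.of_surjective (Quot.mk (reachOn ends S)) Quot.mk_surjective
  haveI : Fintype (Quot (reachOn ends S)) := Fintype.ofFinite _
  set Fc : Quot (reachOn ends S) → Finset E := fun c =>
    Finset.univ.filter (fun e => e ∈ S ∧ ∀ x ∈ ends e, Quot.mk (reachOn ends S) x = c)
    with hFcdef
  set C : Finset E := Finset.univ \ T with hCdef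
  have hCS : ∀ e : E, e ∈ C ↔ e ∈ S := by
    intro e
    simp [hCdef, hSdef]
  -- the classes partition the cotree
  have hFc_disj : ∀ c ∈ (Finset.univ : Finset (Quot (reachOn ends S))),
      ∀ c' ∈ (Finset.univ : Finset (Quot (reachOn ends S))), c ≠ c' →
      Disjoint (Fc c) (Fc c') := by
    intro c _ c' _ hne
    rw [Finset.disjoint_left]
    intro e he he'
    obtain ⟨a, b, hab⟩ := sym2_decomp (ends e)
    have h1 := (Finset.mem_filter.1 he).2.2 a (by rw [hab]; exact Sym2.mem_mk_left _ _)
    have h2 := (Finset.mem_filter.1 he').2.2 a (by rw [hab]; exact Sym2.mem_mk_left _ _)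
    exact hne (h1 ▸ h2 ▸ rfl)
  have hCuni : C = (Finset.univ : Finset (Quot (reachOn ends S))).biUnion Fc := by
    ext e
    rw [Finset.mem_biUnion]
    constructor
    · intro he
      have heS : e ∈ S := (hCS e).1 he
      obtain ⟨a, b, hab⟩ := sym2_decomp (ends e)
      refine ⟨Quot.mk (reachOn ends S) a, Finset.mem_univ _, Finset.mem_filter.2
        ⟨Finset.mem_univ _, heS, ?_⟩⟩
      intro x hx
      exact (hq x a).2 (reach_endpoints ends heS hx
        (by rw [hab]; exact Sym2.mem_mk_left _ _))
    · rintro ⟨c, _, hc⟩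
      exact (hCS e).2 (Finset.mem_filter.1 hc).2.1
  have hcardC : C.card = ∑ c : Quot (reachOn ends S), (Fc c).card := by
    rw [hCuni, Finset.card_biUnion hFc_disj]
  -- connectivity of each class on its touched vertices
  have htouch_class : ∀ c, ∀ x : V, touch ends (Fc c) x →
      Quot.mk (reachOn ends S) x = c := by
    rintro c x ⟨e, he, hx⟩
    exact (Finset.mem_filter.1 he).2.2 x hx
  have hFc_conn : ∀ c, ∀ a b : V, touch ends (Fc c) a → touch ends (Fc c) b →
      reachOn ends (↑(Fc c) : Set E) a b := by
    intro c a b ha hb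
    have hqa := htouch_class c a ha
    have hqb := htouch_class c b hb
    have hab : reachOn ends S a b := (hq a b).1 (hqa.trans hqb.symm)
    have hrest := reach_in_class ends S hab
    refine reachOn_mono ends ?_ hrest
    intro e he
    refine Finset.mem_coe.2 (Finset.mem_filter.2 ⟨Finset.mem_univ _, he.1, ?_⟩)
    intro z hz
    rw [he.2 z hz, hqa]
  -- pairings in each class
  have hPc : ∀ c, ∃ P, Bundle ends (Fc c) P :=
    fun c => pair_main ends (Fc c).card (Fc c) le_rfl (hFc_conn c)
  choose f hf using hPc
  set P : Finset (E × E) := Finset.univ.biUnion f with hPdef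
  have hfFc : ∀ c, ∀ p ∈ f c, p.1 ∈ Fc c ∧ p.2 ∈ Fc c ∧ AdjPair ends p.1 p.2 :=
    fun c => (hf c).1
  have hfdisj : ∀ c ∈ (Finset.univ : Finset (Quot (reachOn ends S))),
      ∀ c' ∈ (Finset.univ : Finset (Quot (reachOn ends S))), c ≠ c' →
      Disjoint (f c) (f c') := by
    intro c _ c' _ hne
    rw [Finset.disjoint_left]
    intro p hp hp'
    exact Finset.disjoint_left.1 (hFc_disj c (Finset.mem_univ _) c' (Finset.mem_univ _) hne)
      (hfFc c p hp).1 (hfFc c' p hp').1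
  have hcardP : P.card = ∑ c : Quot (reachOn ends S), (f c).card :=
    Finset.card_biUnion hfdisj
  have hFcS : ∀ c, ∀ e ∈ Fc c, e ∈ S := fun c e he => (Finset.mem_filter.1 he).2.1
  -- validity of the global pairing
  have hvalid : ValidOn ends Set.univ P := by
    refine ⟨?_, ?_, ?_⟩
    · intro p hp
      obtain ⟨c, _, hc⟩ := Finset.mem_biUnion.1 hp
      exact ⟨Set.mem_univ _, Set.mem_univ _, (hfFc c p hc).2.2⟩
    · intro p hp q hq hpq
      obtain ⟨c, _, hc⟩ := Finset.mem_biUnion.1 hp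
      obtain ⟨c', _, hc'⟩ := Finset.mem_biUnion.1 hq
      by_cases hcc : c = c'
      · subst hcc
        exact (hf c).2.1 p hc q hc' hpq
      · have hd := Finset.disjoint_left.1
          (hFc_disj c (Finset.mem_univ _) c' (Finset.mem_univ _) hcc)
        refine ⟨?_, ?_, ?_, ?_⟩
        · intro h; exact hd (hfFc c p hc).1 (h ▸ (hfFc c' q hc').1)
        · intro h; exact hd (hfFc c p hc).1 (h ▸ (hfFc c' q hc').2.1)
        · intro h; exact hd (hfFc c p hc).2.1 (h ▸ (hfFc c' q hc').1)
        · intro h; exact hd (hfFc c p hc).2.1 (h ▸ (hfFc c' q hc').2.1)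
    · -- connectivity: the tree survives
      have hTsub : (↑T : Set E) ⊆ PairsRemoved Set.univ P := by
        intro e he
        refine ⟨Set.mem_univ _, ?_⟩
        intro p hp
        obtain ⟨c, _, hc⟩ := Finset.mem_biUnion.1 hp
        have h1 : p.1 ∈ S := hFcS c p.1 (hfFc c p hc).1
        have h2 : p.2 ∈ S := hFcS c p.2 (hfFc c p hc).2.1
        rw [hSdef] at h1 h2
        constructor
        · rintro rfl; exact h1 he
        · rintro rfl; exact h2 he
      intro a b
      exact reachOn_mono ends hTsub (hTconn a b)
  -- m(G) ≥ |P|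
  have hmaxP : P.card ≤ maxPairsOn ends Set.univ := by
    apply le_csSup
    · refine ⟨Fintype.card (E × E), ?_⟩
      rintro k ⟨P', _, rfl⟩
      exact le_trans (Finset.card_le_univ P') (le_of_eq (Finset.card_univ))
    · exact ⟨P, hvalid, rfl⟩
  -- counting
  have hcount : ∀ c, 2 * (f c).card + (Fc c).card % 2 = (Fc c).card :=
    fun c => (hf c).2.2
  have hsum : 2 * P.card + (∑ c : Quot (reachOn ends S), (Fc c).card % 2) = C.card := by
    rw [hcardP, hcardC, Finset.mul_sum, ← Finset.sum_add_distrib]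
    exact Finset.sum_congr rfl (fun c _ => hcount c)
  have hoddsum : (∑ c : Quot (reachOn ends S), (Fc c).card % 2) =
      (Finset.univ.filter (fun c => Odd (Fc c).card)).card := by
    rw [Finset.card_filter]
    refine Finset.sum_congr rfl (fun c _ => ?_)
    rcases Nat.even_or_odd (Fc c).card with h | h
    · simp [Nat.even_iff.1 h, h, Nat.not_odd_iff_even.2 h]
    · simp [Nat.odd_iff.1 h, h]
  have hoddcomp : oddComp ends S = (Finset.univ.filter (fun c => Odd (Fc c).card)).card := by
    rw [oddComp]
    have hinner : ∀ c : Quot (reachOn ends S),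
        Nat.card {e : E // e ∈ S ∧ ∀ x ∈ ends e, Quot.mk (reachOn ends S) x = c} =
        (Fc c).card := by
      intro c
      rw [Nat.card_eq_fintype_card, hFcdef]
      exact Fintype.card_subtype _
    rw [Nat.card_eq_fintype_card]
    rw [← Fintype.card_subtype]
    exact Fintype.card_congr (Equiv.subtypeEquivRight (fun c => by rw [hinner c]))
  -- final arithmetic
  have hTle : T.card ≤ Fintype.card E :=
    le_trans (Finset.card_le_univ T) (le_of_eq Finset.card_univ)
  have hCcard : C.card = Fintype.card E - T.card := by
    rw [hCdef, Finset.card_sdiff_of_subset (Finset.subset_univ T), Finset.card_univ]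
  omega
end

section
/- For every simple graph G with n vertices and m edges, the sum of the squares of the vertex degrees satisfies Σ d(v)² ≤ m(2m/(n−1) + n − 2). -/
open Finset


set_option maxHeartbeats 1000000 in
lemma deCaen_arith1 (N M d : ℝ) (hN : 2 ≤ N) (hd1 : 1 ≤ d) (hdN : d ≤ N)
    (hmin : (N+1)*d ≤ 2*M) (hmax : 2*M ≤ N*(N-1) + 2*d)
    (hbr : 2*d*N - d^2 + d ≤ 2*M) :
    0 ≤ -(N^2*d^2) - N^3*d - N*d^2 + 4*N*M*d + N^2*M - 2*M^2 + N*d - N*M := by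
  nlinarith [sq_nonneg (M - d*N), sq_nonneg (M - N), sq_nonneg (d-1), mul_nonneg (sub_nonneg.2 hd1) (sub_nonneg.2 hdN), mul_nonneg (sub_nonneg.2 hbr) (sub_nonneg.2 hmax), mul_nonneg (sub_nonneg.2 hmin) (sub_nonneg.2 hmax), mul_nonneg (sub_nonneg.2 hbr) (sub_nonneg.2 hmin), sq_nonneg (2*M - N*(N-1) - 2*d)]

lemma deCaen_arith2 (N M d : ℝ) (hN : 2 ≤ N) (hd1 : 1 ≤ d) (hdN : d ≤ N)
    (hmin : (N+1)*d ≤ 2*M) (hmax : 2*M ≤ N*(N-1) + 2*d)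
    (hbr : 2*M ≤ 2*d*N - d^2 + d) :
    0 ≤ -(2*N^2*d^2) + N^3*d + 4*N*M*d - N^2*d - N^2*M - 2*M^2 + N*M := by
  nlinarith [sq_nonneg (M - d*N), sq_nonneg (d-1), mul_nonneg (sub_nonneg.2 hd1) (sub_nonneg.2 hdN), mul_nonneg (sub_nonneg.2 hbr) (sub_nonneg.2 hmax), mul_nonneg (sub_nonneg.2 hmin) (sub_nonneg.2 hbr), mul_nonneg (sub_nonneg.2 hmin) (sub_nonneg.2 hmax), sq_nonneg (2*M - (N+1)*d)]

lemma deCaen_keyStep (N M d S2 Sc t : ℝ) (hN : 2 ≤ N) (hd : d = 0 ∨ 1 ≤ d) (hd0 : 0 ≤ d)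
    (hdN : d ≤ N) (hdM : d ≤ M)
    (hmin : (N+1)*d ≤ 2*M) (hmax : 2*M ≤ N*(N-1) + 2*d)
    (hIH : Sc ≤ (M-d)*(2*(M-d)/(N-1) + N - 2))
    (hsum : S2 = Sc + 2*t - d + d^2)
    (ht1 : 2*t ≤ 2*M + d^2 - d) (ht2 : t ≤ d*N) (ht0 : 0 ≤ t) :
    S2 ≤ M*(2*M/N + N - 1) := by
  have hN0 : (0:ℝ) < N := by linarith
  have hN1 : (0:ℝ) < N - 1 := by linarith
  have hIH' : Sc * (N-1) ≤ 2*(M-d)^2 + (M-d)*(N-1)*(N-2) := by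
    have h2 : (M-d)*(2*(M-d)/(N-1) + N - 2) = (2*(M-d)^2 + (M-d)*(N-1)*(N-2))/(N-1) := by
      field_simp; ring
    rw [h2, le_div_iff₀ hN1] at hIH
    exact hIH
  have hgoal : M*(2*M/N + N - 1) = (2*M^2 + M*N*(N-1))/N := by field_simp; ring
  rw [hgoal, le_div_iff₀ hN0]
  rcases hd with rfl | hd1
  · have ht : t = 0 := le_antisymm (by linarith [ht2]) ht0
    nlinarith [hIH', sq_nonneg M]
  · rcases le_total (2*M) (2*d*N - d^2 + d) with hbr | hbr
    · have h := deCaen_arith2 N M d hN hd1 hdN hmin hmax hbr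
      nlinarith [hIH', mul_le_mul_of_nonneg_right ht1 (le_of_lt hN1)]
    · have h := deCaen_arith1 N M d hN hd1 hdN hmin hmax hbr
      nlinarith [hIH', mul_le_mul_of_nonneg_right ht2 (mul_pos hN0 hN1).le]

section Body
variable {n : ℕ} (b : Fin (n+1) → Fin (n+1) → ℝ)

lemma deCaen_body (hn : 2 ≤ n)
    (IH : ∀ (a : Fin n → Fin n → ℝ),
      (∀ i j, a i j = 0 ∨ a i j = 1) → (∀ i j, a i j = a j i) → (∀ i, a i i = 0) →
      ∑ i, (∑ j, a i j)^2 ≤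
        (∑ i, ∑ j, a i j)/2 * ((∑ i, ∑ j, a i j)/((n:ℝ)-1) + (n:ℝ) - 2))
    (hb01 : ∀ i j, b i j = 0 ∨ b i j = 1) (hbsymm : ∀ i j, b i j = b j i)
    (hbdiag : ∀ i, b i i = 0)
    (hmin' : ∀ i, ∑ j, b (Fin.last n) j ≤ ∑ j, b i j) :
    ∑ i, (∑ j, b i j)^2 ≤
      (∑ i, ∑ j, b i j)/2 * ((∑ i, ∑ j, b i j)/(((n+1:ℕ):ℝ) - 1) + ((n+1:ℕ):ℝ) - 2) := by
  have hb0 : ∀ i j, 0 ≤ b i j := by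
    intro i j; rcases hb01 i j with h | h <;> rw [h] <;> norm_num
  have hb1 : ∀ i j, b i j ≤ 1 := by
    intro i j; rcases hb01 i j with h | h <;> rw [h] <;> norm_num
  have hbsq : ∀ i j, b i j * b i j = b i j := by
    intro i j; rcases hb01 i j with h | h <;> rw [h] <;> norm_num
  set L := Fin.last n with hL
  set N := (n : ℝ) with hN
  have hN2 : 2 ≤ N := by rw [hN]; exact_mod_cast hn
  set D : Fin (n+1) → ℝ := fun i => ∑ j, b i j with hD
  set d := D L with hd
  set S := ∑ i, D i with hS
  set c : Fin n → Fin n → ℝ := fun k l => b k.castSucc l.castSucc with hc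
  set Dc : Fin n → ℝ := fun k => ∑ l, c k l with hDc
  set t := ∑ i, b i L * D i with ht
  have hD0 : ∀ i, 0 ≤ D i := fun i => Finset.sum_nonneg (fun j _ => hb0 i j)
  have hDle : ∀ i, D i ≤ N := by
    intro i
    have h0 : D i = ∑ j ∈ univ.erase i, b i j := by
      rw [hD]; rw [Finset.sum_erase_eq_sub (mem_univ i), hbdiag i, sub_zero]
    rw [h0]
    calc ∑ j ∈ univ.erase i, b i j ≤ ∑ j ∈ univ.erase i, 1 :=
          Finset.sum_le_sum (fun j _ => hb1 i j)
      _ = N := by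
          rw [Finset.sum_const, Finset.card_erase_of_mem (mem_univ i)]
          simp [hN]
  have hcol : ∑ i, b i L = d := by
    rw [hd, hD]; exact Finset.sum_congr rfl (fun i _ => hbsymm i L)
  have hDcval : ∀ k, Dc k = D k.castSucc - b k.castSucc L := by
    intro k
    have h0 : D k.castSucc = (∑ l : Fin n, b k.castSucc l.castSucc) + b k.castSucc L := by
      rw [hD]; exact Fin.sum_univ_castSucc (fun j => b k.castSucc j)
    rw [hDc]; simp only [hc]; rw [h0]; ring
  have hsplitD : S = (∑ k : Fin n, D k.castSucc) + d := by
    rw [hS]; exact Fin.sum_univ_castSucc D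
  have hsplitcol : (∑ k : Fin n, b k.castSucc L) = d := by
    have h1 : ∑ i, b i L = (∑ k : Fin n, b k.castSucc L) + b L L :=
      Fin.sum_univ_castSucc (fun i => b i L)
    rw [hcol, hbdiag L] at h1; linarith
  have hScS : ∑ k, Dc k = S - 2*d := by
    have h0 : ∑ k, Dc k = (∑ k : Fin n, D k.castSucc) - ∑ k : Fin n, b k.castSucc L := by
      rw [← Finset.sum_sub_distrib]
      exact Finset.sum_congr rfl (fun k _ => hDcval k)
    rw [h0, hsplitcol]; linarith [hsplitD]
  have hsq : ∑ i, (D i)^2 = (∑ k, (Dc k)^2) + 2*t - d + d^2 := by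
    have h1 : ∑ i, (D i)^2 = (∑ k : Fin n, (D k.castSucc)^2) + d^2 :=
      Fin.sum_univ_castSucc (fun i => (D i)^2)
    have ht' : t = ∑ k : Fin n, b k.castSucc L * D k.castSucc := by
      have h2 := Fin.sum_univ_castSucc (fun i => b i L * D i)
      rw [ht, h2, hbdiag L]; ring
    have h2 : ∀ k : Fin n, (D k.castSucc)^2
        = (Dc k)^2 + 2 * (b k.castSucc L * D k.castSucc) - b k.castSucc L := by
      intro k
      have hx := hbsq k.castSucc L
      have h := hDcval k
      linear_combination (-(Dc k + D k.castSucc - b k.castSucc L)) * h - hx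
    rw [h1, Finset.sum_congr rfl (fun k _ => h2 k)]
    rw [Finset.sum_sub_distrib, Finset.sum_add_distrib, ← Finset.mul_sum, ← ht', hsplitcol]
  -- column sums equal row sums
  have hcolsum : ∀ j, ∑ i, b i j = D j := by
    intro j; rw [hD]; exact Finset.sum_congr rfl (fun i _ => hbsymm i j)
  have hSS : ∑ i, ∑ j, b i j = S := by rw [hS]
  -- t bounds
  have ht0 : 0 ≤ t := Finset.sum_nonneg fun i _ => mul_nonneg (hb0 i L) (hD0 i)
  have ht2 : t ≤ d * N := by
    calc t ≤ ∑ i, b i L * N :=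
          Finset.sum_le_sum fun i _ => mul_le_mul_of_nonneg_left (hDle i) (hb0 i L)
      _ = d * N := by rw [← Finset.sum_mul, hcol]
  have ht1 : 2*t ≤ S + d^2 - d := by
    have e1 : t = ∑ i, ∑ j, b i j * b i L := by
      rw [ht]
      refine Finset.sum_congr rfl fun i _ => ?_
      have hDi : D i = ∑ j, b i j := rfl
      rw [hDi, Finset.mul_sum]
      exact Finset.sum_congr rfl fun j _ => mul_comm _ _
    have e2 : t = ∑ i, ∑ j, b i j * b j L := by
      have swap : ∑ i, ∑ j, b i j * b j L = ∑ j, ∑ i, b i j * b j L :=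
        Finset.sum_comm
      rw [swap, ht]
      refine Finset.sum_congr rfl fun j _ => ?_
      rw [← Finset.sum_mul, hcolsum j, mul_comm]
    have h2t : 2*t = ∑ i, ∑ j, (b i j * b i L + b i j * b j L) := by
      rw [Finset.sum_congr rfl fun i (_ : i ∈ univ) => Finset.sum_add_distrib]
      rw [Finset.sum_add_distrib, ← e1, ← e2]; ring
    have hpt : ∀ i j, b i j * b i L + b i j * b j L
        ≤ b i j + b i j * (b i L * b j L) := by
      intro i j
      nlinarith [mul_nonneg (mul_nonneg (hb0 i j) (sub_nonneg.2 (hb1 i L)))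
        (sub_nonneg.2 (hb1 j L))]
    have hinner : ∀ i, ∑ j, b i j * b j L ≤ d - b i L := by
      intro i
      have hz : ∑ j, b i j * b j L = ∑ j ∈ univ.erase i, b i j * b j L := by
        rw [Finset.sum_erase_eq_sub (mem_univ i), hbdiag i, zero_mul, sub_zero]
      rw [hz]
      calc ∑ j ∈ univ.erase i, b i j * b j L ≤ ∑ j ∈ univ.erase i, b j L :=
            Finset.sum_le_sum fun j _ =>
              mul_le_of_le_one_left (hb0 j L) (hb1 i j)
        _ = d - b i L := by rw [Finset.sum_erase_eq_sub (mem_univ i), hcol]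
    have hE2 : ∑ i, ∑ j, b i j * (b i L * b j L) ≤ d^2 - d := by
      have step1 : ∀ i, ∑ j, b i j * (b i L * b j L) = b i L * ∑ j, b i j * b j L := by
        intro i
        rw [Finset.mul_sum]
        exact Finset.sum_congr rfl fun j _ => by ring
      calc ∑ i, ∑ j, b i j * (b i L * b j L)
          = ∑ i, b i L * ∑ j, b i j * b j L :=
            Finset.sum_congr rfl fun i _ => step1 i
        _ ≤ ∑ i, b i L * (d - b i L) :=
            Finset.sum_le_sum fun i _ =>
              mul_le_mul_of_nonneg_left (hinner i) (hb0 i L)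
        _ = d^2 - d := by
            have : ∀ i, b i L * (d - b i L) = b i L * d - b i L := by
              intro i
              have := hbsq i L
              linear_combination -this
            rw [Finset.sum_congr rfl fun i _ => this i, Finset.sum_sub_distrib,
              ← Finset.sum_mul, hcol]
            ring
    calc 2*t = ∑ i, ∑ j, (b i j * b i L + b i j * b j L) := h2t
      _ ≤ ∑ i, ∑ j, (b i j + b i j * (b i L * b j L)) :=
          Finset.sum_le_sum fun i _ => Finset.sum_le_sum fun j _ => hpt i j
      _ = S + ∑ i, ∑ j, b i j * (b i L * b j L) := by
          rw [Finset.sum_congr rfl fun i (_ : i ∈ univ) => Finset.sum_add_distrib,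
            Finset.sum_add_distrib, hSS]
      _ ≤ S + (d^2 - d) := by linarith [hE2]
      _ = S + d^2 - d := by ring
  -- min degree, d bounds
  have hdmin : ∀ i, d ≤ D i := fun i => hmin' i
  have hminS : (N+1)*d ≤ S := by
    have h0 : (univ : Finset (Fin (n+1))).card • d ≤ ∑ i, D i :=
      Finset.card_nsmul_le_sum univ D d fun i _ => hdmin i
    rw [Finset.card_univ, Fintype.card_fin, nsmul_eq_mul] at h0
    rw [hS, hN]
    push_cast at h0 ⊢
    linarith
  have hDcle : ∀ k, Dc k ≤ N - 1 := by
    intro k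
    have hz : Dc k = ∑ l ∈ univ.erase k, c k l := by
      rw [hDc, Finset.sum_erase_eq_sub (mem_univ k)]
      have : c k k = 0 := hbdiag k.castSucc
      rw [this, sub_zero]
    rw [hz]
    calc ∑ l ∈ univ.erase k, c k l ≤ ∑ l ∈ univ.erase k, 1 :=
          Finset.sum_le_sum fun l _ => hb1 _ _
      _ = N - 1 := by
          rw [Finset.sum_const, Finset.card_erase_of_mem (mem_univ k),
            Finset.card_univ, Fintype.card_fin, nsmul_eq_mul, mul_one]
          have h1 : (1:ℕ) ≤ n := by omega
          rw [Nat.cast_sub h1]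
          simp [hN]
  have hDc0 : ∀ k, 0 ≤ Dc k := fun k => Finset.sum_nonneg fun l _ => hb0 _ _
  have hmaxS : S ≤ N*(N-1) + 2*d := by
    have h0 : ∑ k, Dc k ≤ ∑ k : Fin n, (N - 1) :=
      Finset.sum_le_sum fun k _ => hDcle k
    rw [Finset.sum_const, Finset.card_univ, Fintype.card_fin, nsmul_eq_mul] at h0
    rw [hScS] at h0
    linarith
  have hdM2 : 2*d ≤ S := by
    have h0 : 0 ≤ ∑ k, Dc k := Finset.sum_nonneg fun k _ => hDc0 k
    rw [hScS] at h0; linarith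
  have hdcase : d = 0 ∨ 1 ≤ d := by
    by_cases hz : ∀ i, b i L = 0
    · left; rw [← hcol]; exact Finset.sum_eq_zero fun i _ => hz i
    · right
      push_neg at hz
      obtain ⟨i, hi⟩ := hz
      have h1 : b i L = 1 := (hb01 i L).resolve_left hi
      calc (1:ℝ) = b i L := h1.symm
        _ ≤ ∑ i, b i L := Finset.single_le_sum (fun j _ => hb0 j L) (mem_univ i)
        _ = d := hcol
  -- apply IH to c
  have hc01 : ∀ k l, c k l = 0 ∨ c k l = 1 := fun k l => hb01 _ _
  have hcsymm : ∀ k l, c k l = c l k := fun k l => hbsymm _ _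
  have hcdiag : ∀ k, c k k = 0 := fun k => hbdiag _
  have hIHc := IH c hc01 hcsymm hcdiag
  have hScc : ∑ k, ∑ l, c k l = S - 2*d := by rw [← hScS]
  have hIH2 : ∑ k, (Dc k)^2 ≤ (S/2 - d)*(2*(S/2 - d)/(N-1) + N - 2) := by
    have hsame : ∑ k, (∑ l, c k l)^2 = ∑ k, (Dc k)^2 :=
      Finset.sum_congr rfl fun k _ => rfl
    rw [hsame, hScc] at hIHc
    have hr : (S - 2*d)/2 * ((S - 2*d)/(N-1) + N - 2)
        = (S/2 - d)*(2*(S/2 - d)/(N-1) + N - 2) := by ring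
    rw [hr] at hIHc
    exact hIHc
  -- conclude via deCaen_keyStep
  have hkey := deCaen_keyStep N (S/2) d (∑ i, (D i)^2) (∑ k, (Dc k)^2) t hN2 hdcase (hD0 L)
    (hDle L) (by linarith) (by linarith) (by linarith) hIH2 hsq (by linarith) ht2 ht0
  have hcast : ((n+1:ℕ):ℝ) = N + 1 := by rw [hN]; push_cast; ring
  rw [hcast]
  have h1 : N + 1 - 1 = N := by ring
  rw [h1]
  have hfin : S/2*(2*(S/2)/N + N - 1) = S/2 * (S/N + (N+1) - 2) := by ring
  linarith [hkey, le_of_eq hfin]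
end Body

lemma deCaen_core : ∀ (n : ℕ), 2 ≤ n → ∀ (a : Fin n → Fin n → ℝ),
    (∀ i j, a i j = 0 ∨ a i j = 1) → (∀ i j, a i j = a j i) → (∀ i, a i i = 0) →
    ∑ i, (∑ j, a i j)^2 ≤
      (∑ i, ∑ j, a i j)/2 * ((∑ i, ∑ j, a i j)/((n:ℝ)-1) + (n:ℝ) - 2) := by
  refine Nat.le_induction ?_ ?_
  · intro a h01 hsymm hdiag
    have h0 : a 0 0 = 0 := hdiag 0
    have h1 : a 1 1 = 0 := hdiag 1
    have h2 : a 1 0 = a 0 1 := hsymm 1 0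
    simp only [Fin.sum_univ_two, h0, h1, h2]
    norm_num
    nlinarith [sq_nonneg (a 0 1)]
  · intro n hn IH a h01 hsymm hdiag
    obtain ⟨v, -, hv⟩ := Finset.exists_min_image (univ : Finset (Fin (n+1)))
      (fun i => ∑ j, a i j) ⟨0, mem_univ 0⟩
    set σ := Equiv.swap v (Fin.last n) with hσ
    set b : Fin (n+1) → Fin (n+1) → ℝ := fun i j => a (σ i) (σ j) with hb
    have hb01 : ∀ i j, b i j = 0 ∨ b i j = 1 := fun i j => h01 _ _
    have hbsymm : ∀ i j, b i j = b j i := fun i j => hsymm _ _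
    have hbdiag : ∀ i, b i i = 0 := fun i => by simp [hb, hdiag]
    have hrow : ∀ i, ∑ j, b i j = ∑ j, a (σ i) j := fun i =>
      Equiv.sum_comp σ (fun j => a (σ i) j)
    have hLHS : ∑ i, (∑ j, b i j)^2 = ∑ i, (∑ j, a i j)^2 := by
      calc ∑ i, (∑ j, b i j)^2 = ∑ i, (∑ j, a (σ i) j)^2 := by
            simp_rw [hrow]
        _ = ∑ i, (∑ j, a i j)^2 := Equiv.sum_comp σ (fun i => (∑ j, a i j)^2)
    have hS : ∑ i, ∑ j, b i j = ∑ i, ∑ j, a i j := by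
      calc ∑ i, ∑ j, b i j = ∑ i, ∑ j, a (σ i) j := by simp_rw [hrow]
        _ = _ := Equiv.sum_comp σ (fun i => ∑ j, a i j)
    rw [← hLHS, ← hS]
    have hmin' : ∀ i, ∑ j, b (Fin.last n) j ≤ ∑ j, b i j := by
      intro i
      rw [hrow, hrow]
      have hvl : σ (Fin.last n) = v := Equiv.swap_apply_right v (Fin.last n)
      rw [hvl]
      exact hv (σ i) (mem_univ _)
    exact deCaen_body b hn IH hb01 hbsymm hbdiag hmin'

/-- de Caen's bound: `Σ d(v)² ≤ m(2m/(n−1) + n − 2)`. -/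
theorem deCaen_bound {V : Type} [Fintype V] [DecidableEq V]
    (G : SimpleGraph V) [DecidableRel G.Adj] (hn : 2 ≤ Fintype.card V) :
    (∑ v : V, (G.degree v : ℝ) ^ 2) ≤
      (G.edgeFinset.card : ℝ) *
        (2 * (G.edgeFinset.card : ℝ) / ((Fintype.card V : ℝ) - 1) +
          (Fintype.card V : ℝ) - 2) := by
  classical
  set n := Fintype.card V with hn'
  obtain ⟨e⟩ : Nonempty (V ≃ Fin n) := ⟨Fintype.equivFinOfCardEq rfl⟩
  set a : Fin n → Fin n → ℝ :=
    fun i j => if G.Adj (e.symm i) (e.symm j) then 1 else 0 with ha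
  have h01 : ∀ i j, a i j = 0 ∨ a i j = 1 := by
    intro i j; by_cases h : G.Adj (e.symm i) (e.symm j) <;> simp [ha, h]
  have hsymm : ∀ i j, a i j = a j i := by
    intro i j; simp only [ha]
    by_cases h : G.Adj (e.symm i) (e.symm j)
    · rw [if_pos h, if_pos h.symm]
    · rw [if_neg h, if_neg (fun h' => h h'.symm)]
  have hdiag : ∀ i, a i i = 0 := by
    intro i; simp [ha]
  have hdeg : ∀ v : V, (∑ j, a (e v) j) = (G.degree v : ℝ) := by
    intro v
    have h1 : ∑ j, a (e v) j = ∑ u : V, (if G.Adj v u then (1:ℝ) else 0) := by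
      rw [← Equiv.sum_comp e (fun j => a (e v) j)]
      refine Finset.sum_congr rfl fun u _ => ?_
      simp [ha]
    rw [h1, Finset.sum_boole]
    congr 1
    rw [SimpleGraph.degree]
    congr 1
    ext u
    simp [SimpleGraph.mem_neighborFinset]
  have hrows : ∑ i, (∑ j, a i j)^2 = ∑ v : V, (G.degree v : ℝ)^2 := by
    rw [← Equiv.sum_comp e (fun i => (∑ j, a i j)^2)]
    exact Finset.sum_congr rfl fun v _ => by rw [hdeg v]
  have hsum : ∑ i, ∑ j, a i j = 2 * (G.edgeFinset.card : ℝ) := by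
    rw [← Equiv.sum_comp e (fun i => ∑ j, a i j)]
    rw [Finset.sum_congr rfl fun v (_ : v ∈ univ) => hdeg v]
    rw [← Nat.cast_sum]
    rw [SimpleGraph.sum_degrees_eq_twice_card_edges]
    push_cast; ring
  have hc := deCaen_core n hn a h01 hsymm hdiag
  rw [hrows, hsum] at hc
  calc ∑ v : V, (G.degree v : ℝ)^2
      ≤ 2 * (G.edgeFinset.card:ℝ)/2 *
        (2*(G.edgeFinset.card:ℝ)/((n:ℝ)-1) + (n:ℝ) - 2) := hc
    _ = (G.edgeFinset.card : ℝ) *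
        (2 * (G.edgeFinset.card : ℝ) / ((Fintype.card V : ℝ) - 1) +
          (Fintype.card V : ℝ) - 2) := by rw [← hn']; ring
end

section
/- For every positive integer n, the graph G_n obtained from the star K_{1,2n} by doubling every edge and attaching one loop at each leaf satisfies m(G_n) = 2n, where m denotes the maximum number of pairwise disjoint pairs of adjacent edges whose removal leaves the graph connected. -/
/-- the graph `G_n` (star `K_{1,2n}` with doubled edges and a loop at
each leaf) satisfies `m(G_n) = 2n`.  Edges: `(i,0)` and `(i,1)` are the two parallel
edges joining the centre `none` to the leaf `some i`; `(i,2)` is the loop at `some i`. -/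
theorem maxPairs_Gn (n : ℕ) (hn : 0 < n)
    (ends : Fin (2 * n) × Fin 3 → Sym2 (Option (Fin (2 * n))))
    (hends : ∀ i : Fin (2 * n),
      ends (i, 0) = s((none : Option (Fin (2 * n))), some i) ∧
      ends (i, 1) = s((none : Option (Fin (2 * n))), some i) ∧
      ends (i, 2) = s((some i : Option (Fin (2 * n))), some i)) :
    maxPairsOn ends Set.univ = 2 * n := by
  classical
  -- Upper bound: every valid P has card ≤ 2n
  have hub : ∀ P : Finset ((Fin (2*n) × Fin 3) × (Fin (2*n) × Fin 3)),
      ValidOn ends Set.univ P → P.card ≤ 2 * n := by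
    intro P hP
    obtain ⟨hmem, hdisj, hconn⟩ := hP
    set R := PairsRemoved Set.univ P with hRdef
    have key : ∀ i : Fin (2*n), ((i,(0:Fin 3)) ∈ R) ∨ ((i,(1:Fin 3)) ∈ R) := by
      intro i
      have h := hconn none (some i)
      have H : ∀ b, reachOn ends R none b → b = some i →
          ((i,(0:Fin 3)) ∈ R) ∨ ((i,(1:Fin 3)) ∈ R) := by
        intro b hb
        induction hb with
        | refl => intro h; exact absurd h (by simp)
        | tail hac hstep ih =>
          rename_i c d
          intro hd; subst hd
          obtain ⟨⟨j, k⟩, heR, hee⟩ := hstep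
          fin_cases k
          · have hee' : s((none : Option (Fin (2*n))), some j) = s(c, some i) := by
              rw [← (hends j).1]; exact hee
            rw [Sym2.eq_iff] at hee'
            rcases hee' with ⟨h1, h2⟩ | ⟨h1, h2⟩
            · obtain rfl : j = i := Option.some.inj h2
              exact Or.inl heR
            · exact absurd h1 (by simp)
          · have hee' : s((none : Option (Fin (2*n))), some j) = s(c, some i) := by
              rw [← (hends j).2.1]; exact hee
            rw [Sym2.eq_iff] at hee'
            rcases hee' with ⟨h1, h2⟩ | ⟨h1, h2⟩
            · obtain rfl : j = i := Option.some.inj h2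
              exact Or.inr heR
            · exact absurd h1 (by simp)
          · have hee' : s((some j : Option (Fin (2*n))), some j) = s(c, some i) := by
              rw [← (hends j).2.2]; exact hee
            rw [Sym2.eq_iff] at hee'
            have hc : c = some i := by
              rcases hee' with ⟨h1, h2⟩ | ⟨h1, h2⟩
              · rw [← h1, h2]
              · rw [← h2, h1]
            exact ih hc
      exact H _ h rfl
    -- removed edges
    set D : Finset (Fin (2*n) × Fin 3) := P.biUnion (fun p => {p.1, p.2}) with hDdef
    have hDR : ∀ x ∈ D, x ∉ R := by
      intro x hx hxR
      simp only [hDdef, Finset.mem_biUnion, Finset.mem_insert, Finset.mem_singleton] at hx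
      obtain ⟨p, hp, h⟩ := hx
      obtain ⟨-, hx2⟩ := hxR
      rcases h with rfl | rfl
      · exact (hx2 p hp).1 rfl
      · exact (hx2 p hp).2 rfl
    set T : Finset (Fin (2*n) × Fin 3) :=
      Finset.image (fun i : Fin (2*n) =>
        if (i,(0:Fin 3)) ∈ R then (i,(0:Fin 3)) else (i,(1:Fin 3))) Finset.univ with hTdef
    have hTR : ∀ x ∈ T, x ∈ R := by
      intro x hx
      simp only [hTdef, Finset.mem_image, Finset.mem_univ, true_and] at hx
      obtain ⟨i, rfl⟩ := hx
      by_cases h : (i,(0:Fin 3)) ∈ R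
      · simpa [h]
      · rcases key i with h0 | h1
        · exact absurd h0 h
        · simpa [h]
    have hTcard : T.card = 2 * n := by
      rw [hTdef, Finset.card_image_of_injective _ ?_, Finset.card_univ, Fintype.card_fin]
      intro a b hab
      have h1 := congrArg Prod.fst hab
      simp only at h1
      split_ifs at h1 <;> simpa using h1
    have hDcard : D.card = 2 * P.card := by
      rw [hDdef, Finset.card_biUnion]
      · have : ∀ p ∈ P, ({p.1, p.2} : Finset _).card = 2 := by
          intro p hp
          have hne : p.1 ≠ p.2 := (hmem p hp).2.2.1
          rw [Finset.card_insert_of_notMem (by simpa using hne), Finset.card_singleton]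
        rw [Finset.sum_congr rfl this, Finset.sum_const, smul_eq_mul, mul_comm]
      · intro p hp q hq hpq
        obtain ⟨h1, h2, h3, h4⟩ := hdisj p hp q hq hpq
        rw [Function.onFun, Finset.disjoint_left]
        intro x hx hx'
        simp only [Finset.mem_insert, Finset.mem_singleton] at hx hx'
        rcases hx with rfl | rfl <;> rcases hx' with h | h
        exacts [h1 h, h2 h, h3 h, h4 h]
    have hdisjTD : Disjoint T D := by
      rw [Finset.disjoint_left]
      intro x hxT hxD
      exact hDR x hxD (hTR x hxT)
    have hle : T.card + D.card ≤ Fintype.card (Fin (2*n) × Fin 3) := by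
      rw [← Finset.card_union_of_disjoint hdisjTD]
      exact Finset.card_le_univ _
    rw [hTcard, hDcard, Fintype.card_prod, Fintype.card_fin, Fintype.card_fin] at hle
    omega
  -- Lower bound witness
  set P0 : Finset ((Fin (2*n) × Fin 3) × (Fin (2*n) × Fin 3)) :=
    Finset.image (fun i : Fin (2*n) => ((i,(1:Fin 3)), (i,(2:Fin 3)))) Finset.univ with hP0def
  have hP0mem : ∀ p, p ∈ P0 ↔ ∃ i : Fin (2*n), ((i,(1:Fin 3)), (i,(2:Fin 3))) = p := by
    intro p; simp [hP0def]
  have hP0card : P0.card = 2 * n := by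
    rw [hP0def, Finset.card_image_of_injective _ ?_, Finset.card_univ, Fintype.card_fin]
    intro a b hab
    simpa using congrArg (fun p => p.1.1) hab
  have hR0 : ∀ i : Fin (2*n), (i,(0:Fin 3)) ∈ PairsRemoved Set.univ P0 := by
    intro i
    refine ⟨trivial, ?_⟩
    intro p hp
    obtain ⟨j, rfl⟩ := (hP0mem p).mp hp
    constructor <;> simp [Prod.ext_iff] <;> decide
  have hvalid : ValidOn ends Set.univ P0 := by
    refine ⟨?_, ?_, ?_⟩
    · intro p hp
      obtain ⟨i, rfl⟩ := (hP0mem p).mp hp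
      refine ⟨trivial, trivial, ?_, some i, ?_, ?_⟩
      · simp [Prod.ext_iff]
      · rw [(hends i).2.1]; simp
      · rw [(hends i).2.2]; simp
    · intro p hp q hq hpq
      obtain ⟨i, rfl⟩ := (hP0mem p).mp hp
      obtain ⟨j, rfl⟩ := (hP0mem q).mp hq
      have hij : i ≠ j := fun h => hpq (by rw [h])
      refine ⟨?_, ?_, ?_, ?_⟩ <;> simp [Prod.ext_iff, hij]
    · have r1 : ∀ i : Fin (2*n), reachOn ends (PairsRemoved Set.univ P0) none (some i) :=
        fun i => Relation.ReflTransGen.single ⟨(i, 0), hR0 i, (hends i).1⟩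
      have r2 : ∀ i : Fin (2*n), reachOn ends (PairsRemoved Set.univ P0) (some i) none :=
        fun i => Relation.ReflTransGen.single ⟨(i, 0), hR0 i, by rw [(hends i).1, Sym2.eq_swap]⟩
      intro a b
      have ha : reachOn ends (PairsRemoved Set.univ P0) a none := by
        cases a with
        | none => exact Relation.ReflTransGen.refl
        | some i => exact r2 i
      have hb : reachOn ends (PairsRemoved Set.univ P0) none b := by
        cases b with
        | none => exact Relation.ReflTransGen.refl
        | some i => exact r1 i
      exact ha.trans hb
  -- conclude
  apply le_antisymm
  · exact csSup_le ⟨2 * n, P0, hvalid, hP0card⟩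
      (by rintro k ⟨P, hP, rfl⟩; exact hub P hP)
  · exact le_csSup ⟨2 * n, by rintro k ⟨P, hP, rfl⟩; exact hub P hP⟩ ⟨P0, hvalid, hP0card⟩
end

section
/- For every positive integer n, the graph G_n obtained from the star K_{1,2n} by doubling every edge and attaching one loop at each leaf admits an inclusion-wise maximal set P of pairwise disjoint pairs of adjacent edges, with G_n − P connected, of size exactly n = m(G_n)/2. Hence the factor 2 in the greedy approximation bound for maximum genus is tight. -/
lemma mem_PR' {E : Type} {S : Set E} {P : Finset (E × E)} {x : E} :
    x ∈ PairsRemoved S P ↔ x ∈ S ∧ ∀ p ∈ P, x ≠ p.1 ∧ x ≠ p.2 := Iff.rfl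

lemma fin3cases : ∀ t : Fin 3, t = 0 ∨ t = 1 ∨ t = 2 := by decide

section aux

variable {n : ℕ} {ends : Fin (2 * n) × Fin 3 → Sym2 (Option (Fin (2 * n)))}
variable (hends : ∀ i : Fin (2 * n),
      ends (i, 0) = s((none : Option (Fin (2 * n))), some i) ∧
      ends (i, 1) = s((none : Option (Fin (2 * n))), some i) ∧
      ends (i, 2) = s((some i : Option (Fin (2 * n))), some i))

include hends

lemma lemA (S' : Set (Fin (2 * n) × Fin 3)) (j : Fin (2 * n))
    (h0 : (j, (0 : Fin 3)) ∉ S') (h1 : (j, (1 : Fin 3)) ∉ S') :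
    ∀ b, reachOn ends S' none b → b ≠ some j := by
  intro b hr
  induction hr with
  | refl => simp
  | tail _ step ih =>
    intro hc
    subst hc
    obtain ⟨e', he'S, hee⟩ := step
    obtain ⟨k, t⟩ := e'
    rcases fin3cases t with rfl | rfl | rfl
    · rw [(hends k).1, Sym2.eq_iff] at hee
      rcases hee with ⟨_, hk⟩ | ⟨hb, _⟩
      · obtain rfl : k = j := by injection hk
        exact h0 he'S
      · exact nomatch hb
    · rw [(hends k).2.1, Sym2.eq_iff] at hee
      rcases hee with ⟨_, hk⟩ | ⟨hb, _⟩
      · obtain rfl : k = j := by injection hk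
        exact h1 he'S
      · exact nomatch hb
    · rw [(hends k).2.2, Sym2.eq_iff] at hee
      rcases hee with ⟨hb, hk⟩ | ⟨hk, hb⟩ <;>
        exact ih (hb.symm.trans hk)

lemma notConn (S' : Set (Fin (2 * n) × Fin 3)) (j : Fin (2 * n))
    (h0 : (j, (0 : Fin 3)) ∉ S') (h1 : (j, (1 : Fin 3)) ∉ S') :
    ¬ ConnOn ends S' := fun hc =>
  lemA hends S' j h0 h1 (some j) (hc none (some j)) rfl

lemma connOf (S' : Set (Fin (2 * n) × Fin 3))
    (h : ∀ j : Fin (2 * n), (j, (1 : Fin 3)) ∈ S') : ConnOn ends S' := by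
  have key : ∀ a : Option (Fin (2 * n)), reachOn ends S' none a := by
    intro a
    cases a with
    | none => exact Relation.ReflTransGen.refl
    | some j => exact Relation.ReflTransGen.single ⟨(j, 1), h j, (hends j).2.1⟩
  have key' : ∀ a : Option (Fin (2 * n)), reachOn ends S' a none := by
    intro a
    cases a with
    | none => exact Relation.ReflTransGen.refl
    | some j =>
      exact Relation.ReflTransGen.single ⟨(j, 1), h j, (hends j).2.1.trans (Sym2.eq_swap)⟩
  exact fun a b => (key' a).trans (key b)

lemma cardLe (P : Finset ((Fin (2 * n) × Fin 3) × (Fin (2 * n) × Fin 3)))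
    (hP : ValidOn ends Set.univ P) : P.card ≤ 2 * n := by
  classical
  obtain ⟨hmem, hdisj, hconn⟩ := hP
  have hsurv : ∀ j : Fin (2 * n), (j, (0 : Fin 3)) ∈ PairsRemoved Set.univ P ∨
      (j, (1 : Fin 3)) ∈ PairsRemoved Set.univ P := by
    intro j
    by_contra h
    push_neg at h
    exact lemA hends _ j h.1 h.2 (some j) (hconn none (some j)) rfl
  set R := P.image Prod.fst ∪ P.image Prod.snd with hR
  have hnotR : ∀ x ∈ PairsRemoved Set.univ P, x ∉ R := by
    intro x hx hxR
    rw [hR, Finset.mem_union, Finset.mem_image, Finset.mem_image] at hxR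
    rcases hxR with ⟨p, hp, rfl⟩ | ⟨p, hp, rfl⟩
    · exact (hx.2 p hp).1 rfl
    · exact (hx.2 p hp).2 rfl
  have hcardR : R.card = 2 * P.card := by
    rw [hR, Finset.card_union_of_disjoint, Finset.card_image_of_injOn,
      Finset.card_image_of_injOn]
    · ring
    · intro p hp q hq h
      by_contra hne
      exact (hdisj p hp q hq hne).2.2.2 h
    · intro p hp q hq h
      by_contra hne
      exact (hdisj p hp q hq hne).1 h
    · rw [Finset.disjoint_left]
      rintro x hx1 hx2
      rw [Finset.mem_image] at hx1 hx2
      obtain ⟨p, hp, rfl⟩ := hx1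
      obtain ⟨q, hq, hpq⟩ := hx2
      by_cases hpqe : q = p
      · subst hpqe
        exact (hmem q hq).2.2.1 hpq.symm
      · exact (hdisj q hq p hp hpqe).2.2.1 hpq
  set ψ : Fin (2 * n) → Fin (2 * n) × Fin 3 := fun j =>
    if (j, (0 : Fin 3)) ∈ PairsRemoved Set.univ P then (j, 0) else (j, 1) with hψ
  have hψPR : ∀ j, ψ j ∈ PairsRemoved Set.univ P := by
    intro j
    rw [hψ]
    dsimp only
    split
    · assumption
    · exact (hsurv j).resolve_left (by assumption)
  have hψinj : Function.Injective ψ := by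
    intro a b hab
    have : (ψ a).1 = (ψ b).1 := by rw [hab]
    rw [hψ] at this
    dsimp only at this
    split at this <;> split at this <;> exact this
  set T := Finset.image ψ Finset.univ with hT
  have hTcard : T.card = 2 * n := by
    rw [hT, Finset.card_image_of_injective _ hψinj, Finset.card_univ, Fintype.card_fin]
  have hdisjTR : Disjoint T R := by
    rw [Finset.disjoint_left]
    rintro x hx1 hx2
    rw [hT, Finset.mem_image] at hx1
    obtain ⟨j, _, rfl⟩ := hx1
    exact hnotR _ (hψPR j) hx2
  have htotal : T.card + R.card ≤ 6 * n := by
    rw [← Finset.card_union_of_disjoint hdisjTR]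
    calc (T ∪ R).card ≤ (Finset.univ : Finset (Fin (2 * n) × Fin 3)).card :=
          Finset.card_le_card (Finset.subset_univ _)
      _ = 6 * n := by
          rw [Finset.card_univ, Fintype.card_prod, Fintype.card_fin, Fintype.card_fin]
          ring
  omega

end aux

/-- `G_n` admits an inclusion-wise maximal valid pair set `P` of size
exactly `n = m(G_n)/2`, so the factor 2 in the greedy bound is tight. -/
theorem tightness_Gn (n : ℕ) (hn : 0 < n)
    (ends : Fin (2 * n) × Fin 3 → Sym2 (Option (Fin (2 * n))))
    (hends : ∀ i : Fin (2 * n),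
      ends (i, 0) = s((none : Option (Fin (2 * n))), some i) ∧
      ends (i, 1) = s((none : Option (Fin (2 * n))), some i) ∧
      ends (i, 2) = s((some i : Option (Fin (2 * n))), some i)) :
    ∃ P : Finset ((Fin (2 * n) × Fin 3) × (Fin (2 * n) × Fin 3)),
      ValidOn ends Set.univ P ∧
      (∀ e f, e ∈ PairsRemoved Set.univ P → f ∈ PairsRemoved Set.univ P →
        AdjPair ends e f → ¬ ConnOn ends (PairsRemoved Set.univ P \ {e, f})) ∧
      P.card = n ∧ 2 * P.card = maxPairsOn ends Set.univ := by
  classical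
  -- the maximum-size witness Q
  set Q : Finset ((Fin (2 * n) × Fin 3) × (Fin (2 * n) × Fin 3)) :=
    Finset.image (fun j : Fin (2 * n) => ((j, (0 : Fin 3)), (j, (2 : Fin 3)))) Finset.univ
    with hQ
  have hQcard : Q.card = 2 * n := by
    rw [hQ, Finset.card_image_of_injective, Finset.card_univ, Fintype.card_fin]
    intro a b h
    exact congrArg (fun p => p.1.1) h
  have hQvalid : ValidOn ends Set.univ Q := by
    refine ⟨?_, ?_, ?_⟩
    · rintro p hp
      rw [hQ, Finset.mem_image] at hp
      obtain ⟨j, _, rfl⟩ := hp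
      refine ⟨trivial, trivial, ?_, some j, ?_, ?_⟩
      · simp
      · rw [(hends j).1]; simp
      · rw [(hends j).2.2]; simp
    · rintro p hp q hq hne
      rw [hQ, Finset.mem_image] at hp hq
      obtain ⟨j, _, rfl⟩ := hp
      obtain ⟨k, _, rfl⟩ := hq
      have hjk : j ≠ k := fun h => hne (by rw [h])
      exact ⟨fun h => hjk (congrArg Prod.fst h), fun h => hjk (congrArg Prod.fst h),
        fun h => hjk (congrArg Prod.fst h), fun h => hjk (congrArg Prod.fst h)⟩
    · apply connOf hends
      intro j
      refine mem_PR'.mpr ⟨trivial, ?_⟩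
      rintro p hp
      rw [hQ, Finset.mem_image] at hp
      obtain ⟨k, _, rfl⟩ := hp
      exact ⟨by simp, by simp⟩
  have hmemset : 2 * n ∈ {k | ∃ P : Finset ((Fin (2 * n) × Fin 3) × (Fin (2 * n) × Fin 3)),
      ValidOn ends Set.univ P ∧ P.card = k} := ⟨Q, hQvalid, hQcard⟩
  have hmax : maxPairsOn ends Set.univ = 2 * n := by
    apply le_antisymm
    · apply csSup_le ⟨2 * n, hmemset⟩
      rintro k ⟨P', hP', rfl⟩
      exact cardLe hends P' hP'
    · exact le_csSup ⟨2 * n, by rintro k ⟨P', hP', rfl⟩; exact cardLe hends P' hP'⟩ hmemset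
  -- the bad pairing P
  set φ : Fin n → (Fin (2 * n) × Fin 3) × (Fin (2 * n) × Fin 3) := fun i =>
    (((⟨2 * i.1, by omega⟩ : Fin (2 * n)), (0 : Fin 3)),
     ((⟨2 * i.1 + 1, by omega⟩ : Fin (2 * n)), (0 : Fin 3))) with hφ
  have hφinj : Function.Injective φ := by
    intro a b h
    have := congrArg (fun p => (p.1.1 : Fin (2 * n)).1) h
    rw [hφ] at this
    dsimp only at this
    exact Fin.ext (by omega)
  set P : Finset ((Fin (2 * n) × Fin 3) × (Fin (2 * n) × Fin 3)) :=
    Finset.image φ Finset.univ with hP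
  have hPcard : P.card = n := by
    rw [hP, Finset.card_image_of_injective _ hφinj, Finset.card_univ, Fintype.card_fin]
  have hPR1 : ∀ (j : Fin (2 * n)) (t : Fin 3), t ≠ 0 →
      (j, t) ∈ PairsRemoved Set.univ P := by
    intro j t ht
    refine mem_PR'.mpr ⟨trivial, ?_⟩
    rintro p hp
    rw [hP, Finset.mem_image] at hp
    obtain ⟨i, _, rfl⟩ := hp
    exact ⟨fun h => ht (congrArg Prod.snd h), fun h => ht (congrArg Prod.snd h)⟩
  have hPR0 : ∀ j : Fin (2 * n), (j, (0 : Fin 3)) ∉ PairsRemoved Set.univ P := by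
    intro j hj
    have hjn : j.1 < 2 * n := j.2
    set i : Fin n := ⟨j.1 / 2, by omega⟩ with hi
    have hiP : φ i ∈ P := by
      rw [hP]
      exact Finset.mem_image_of_mem _ (Finset.mem_univ i)
    have hne := hj.2 _ hiP
    have hjv : j = (⟨2 * (j.1 / 2), by omega⟩ : Fin (2 * n)) ∨
        j = (⟨2 * (j.1 / 2) + 1, by omega⟩ : Fin (2 * n)) := by
      rcases Nat.even_or_odd j.1 with ⟨k, hk⟩ | ⟨k, hk⟩
      · left; apply Fin.ext; show j.1 = 2 * (j.1 / 2); omega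
      · right; apply Fin.ext; show j.1 = 2 * (j.1 / 2) + 1; omega
    rcases hjv with h | h
    · exact hne.1 (by rw [h])
    · exact hne.2 (by rw [h])
  refine ⟨P, ⟨?_, ?_, ?_⟩, ?_, hPcard, by rw [hPcard, hmax]⟩
  · rintro p hp
    rw [hP, Finset.mem_image] at hp
    obtain ⟨i, _, rfl⟩ := hp
    refine ⟨trivial, trivial, ?_, none, ?_, ?_⟩
    · intro h
      have := congrArg (fun e => (e.1 : Fin (2 * n)).1) h
      rw [hφ] at this
      dsimp only at this
      omega
    · rw [hφ]; dsimp only; rw [(hends _).1]; simp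
    · rw [hφ]; dsimp only; rw [(hends _).1]; simp
  · rintro p hp q hq hne
    rw [hP, Finset.mem_image] at hp hq
    obtain ⟨a, _, rfl⟩ := hp
    obtain ⟨b, _, rfl⟩ := hq
    have hab : a.1 ≠ b.1 := fun h => hne (by rw [hφ]; congr 1; exact Fin.ext h)
    refine ⟨?_, ?_, ?_, ?_⟩ <;>
      · intro h
        have := congrArg (fun e => (e.1 : Fin (2 * n)).1) h
        rw [hφ] at this
        dsimp only at this
        omega
  · apply connOf hends
    intro j
    exact hPR1 j 1 (by decide)
  · rintro ⟨k, t⟩ ⟨l, u⟩ he hf hadj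
    have ht : t ≠ 0 := fun h => hPR0 k (h ▸ he)
    have hu : u ≠ 0 := fun h => hPR0 l (h ▸ hf)
    rcases fin3cases t with rfl | rfl | rfl
    · exact absurd rfl ht
    · refine notConn hends _ k ?_ ?_
      · intro h
        exact hPR0 k h.1
      · intro h
        exact h.2 (Or.inl rfl)
    · rcases fin3cases u with rfl | rfl | rfl
      · exact absurd rfl hu
      · refine notConn hends _ l ?_ ?_
        · intro h
          exact hPR0 l h.1
        · intro h
          exact h.2 (Or.inr rfl)
      · obtain ⟨hne, x, hx1, hx2⟩ := hadj
        rw [(hends k).2.2] at hx1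
        rw [(hends l).2.2] at hx2
        simp only [Sym2.mem_iff, or_self] at hx1 hx2
        have hkl : k = l := by
          have := hx1.symm.trans hx2
          injection this
        exact (hne (by rw [hkl])).elim
end

section
/- Let G be a connected multigraph in which some vertex lies on two distinct cycles. Then there exists a pair of adjacent edges of G whose removal leaves a connected spanning subgraph; consequently m(G) ≥ 1. -/
lemma reachOn_symm (ends : E → Sym2 V) (S : Set E) :
    Symmetric (reachOn ends S) := by
  have hsym : Symmetric (fun x y => ∃ e ∈ S, ends e = s(x, y)) := by
    rintro x y ⟨e, he, hx⟩
    exact ⟨e, he, by rw [hx, Sym2.eq_swap]⟩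
  exact fun a b h => (@Relation.ReflTransGen.symmetric _ _ ⟨hsym⟩).symm a b h

lemma reachOn_mono (ends : E → Sym2 V) {S T : Set E} (h : S ⊆ T) {a b : V}
    (hr : reachOn ends S a b) : reachOn ends T a b :=
  Relation.ReflTransGen.mono (p := fun x y => ∃ e ∈ T, ends e = s(x, y)) (fun x y ⟨e, he, hx⟩ => ⟨e, h he, hx⟩) a b hr

lemma cycle_detour (ends : E → Sym2 V) {S : Set E} (c : CycleIn ends S) (i : ZMod c.n) :
    reachOn ends {x ∈ S | x ≠ c.e i} (c.v (i+1)) (c.v i) := by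
  haveI : NeZero c.n := ⟨c.npos.ne'⟩
  have key : ∀ k : ℕ, k ≤ c.n - 1 →
      reachOn ends {x ∈ S | x ≠ c.e i} (c.v (i+1)) (c.v (i+1+(k:ZMod c.n))) := by
    intro k
    induction k with
    | zero => intro _; simp only [Nat.cast_zero, add_zero]; exact Relation.ReflTransGen.refl
    | succ k ih =>
      intro hk
      have h1 := ih (Nat.le_of_succ_le hk)
      have hne : ((k+1 : ℕ) : ZMod c.n) ≠ 0 := by
        intro h
        have := (ZMod.natCast_eq_zero_iff _ _).mp h
        have hlt : k + 1 < c.n := lt_of_le_of_lt hk (Nat.sub_lt c.npos one_pos)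
        exact absurd (Nat.le_of_dvd (Nat.succ_pos k) this) (not_le.mpr hlt)
      have hstep : ∃ g ∈ {x ∈ S | x ≠ c.e i},
          ends g = s(c.v (i+1+(k:ZMod c.n)), c.v (i+1+((k+1:ℕ):ZMod c.n))) := by
        refine ⟨c.e (i+1+(k:ZMod c.n)), ⟨c.mem _, ?_⟩, ?_⟩
        · intro h
          apply hne
          have := c.einj h
          push_cast
          linear_combination this - i
        · rw [c.incid]
          congr 1
          push_cast
          ring
      exact h1.tail hstep
  have h := key (c.n - 1) le_rfl
  have hcast : (((c.n - 1 : ℕ)) : ZMod c.n) = -1 := by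
    have : ((c.n - 1 : ℕ) : ZMod c.n) + 1 = ((c.n - 1 + 1 : ℕ) : ZMod c.n) := by push_cast; ring
    rw [Nat.sub_add_cancel c.npos] at this
    simp at this
    linear_combination this
  rw [hcast] at h
  simpa using h

lemma conn_del (ends : E → Sym2 V) {S : Set E} (h : ConnOn ends S)
    (c : CycleIn ends S) (i : ZMod c.n) :
    ConnOn ends {x ∈ S | x ≠ c.e i} := by
  intro a b
  induction h a b with
  | refl => exact .refl
  | @tail x y _ hstep ih =>
    obtain ⟨g, hg, hends⟩ := hstep
    by_cases hgi : g = c.e i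
    · subst hgi
      rw [c.incid i] at hends
      rcases Sym2.eq_iff.mp hends with ⟨hx, hy⟩ | ⟨hx, hy⟩
      · exact ih.trans (hx ▸ hy ▸ reachOn_symm ends _ (cycle_detour ends c i))
      · exact ih.trans (hx ▸ hy ▸ cycle_detour ends c i)
    · exact ih.tail ⟨g, ⟨hg, hgi⟩, hends⟩


lemma cyclic_boundary {n : ℕ} (hn : 0 < n) (P : ZMod n → Prop)
    (i0 : ZMod n) (h0 : P i0) (i1 : ZMod n) (h1 : ¬ P i1) :
    ∃ i, P i ∧ ¬ P (i + 1) := by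
  classical
  haveI : NeZero n := ⟨hn.ne'⟩
  have hex : ∃ k : ℕ, ¬ P (i0 + k) := by
    refine ⟨(i1 - i0).val, ?_⟩
    have : i0 + ((i1 - i0).val : ZMod n) = i1 := by
      rw [ZMod.natCast_val, ZMod.cast_id]; ring
    rwa [this]
  set k := Nat.find hex with hk
  have hkspec : ¬ P (i0 + (k : ZMod n)) := Nat.find_spec hex
  have hkpos : 0 < k := by
    rcases Nat.eq_zero_or_pos k with h | h
    · exfalso; apply hkspec; rw [h]; simpa using h0
    · exact h
  refine ⟨i0 + ((k - 1 : ℕ) : ZMod n), ?_, ?_⟩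
  · by_contra hP
    exact absurd (Nat.find_min hex (Nat.sub_lt hkpos one_pos)) (not_not.mpr hP)
  · have : i0 + ((k - 1 : ℕ) : ZMod n) + 1 = i0 + (k : ZMod n) := by
      have h2 : ((k - 1 : ℕ) : ZMod n) + 1 = ((k - 1 + 1 : ℕ) : ZMod n) := by push_cast; ring
      rw [Nat.sub_add_cancel hkpos] at h2
      rw [add_assoc, h2]
    rwa [this]

lemma good {V E : Type} (ends : E → Sym2 V) (hG : ConnOn ends Set.univ)
    (c c' : CycleIn ends Set.univ) (i : ZMod c.n) (j : ZMod c'.n)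
    (hef : c.e i ∉ Set.range c'.e) :
    ConnOn ends {x | x ≠ c.e i ∧ x ≠ c'.e j} := by
  have h1 : ConnOn ends {x ∈ Set.univ | x ≠ c.e i} := conn_del ends hG c i
  let c'' : CycleIn ends {x ∈ Set.univ | x ≠ c.e i} :=
    { n := c'.n, npos := c'.npos, v := c'.v, e := c'.e, vinj := c'.vinj,
      einj := c'.einj,
      mem := fun k => Set.mem_sep trivial (fun h => hef (h ▸ ⟨k, rfl⟩)),
      incid := c'.incid }
  have h2 : ConnOn ends {x ∈ {x ∈ Set.univ | x ≠ c.e i} | x ≠ c''.e j} :=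
    conn_del ends h1 c'' j
  intro a b
  refine reachOn_mono ends ?_ (h2 a b)
  intro x hx
  obtain ⟨⟨-, hxe⟩, hxf⟩ := hx
  exact ⟨hxe, hxf⟩

lemma caseB {V E : Type} (ends : E → Sym2 V) (c c' : CycleIn ends Set.univ)
    (hg : ∃ k, c.e k ∈ Set.range c'.e) (hx : ∃ k, c.e k ∉ Set.range c'.e) :
    ∃ (ia : ZMod c.n) (ib : ZMod c'.n),
      AdjPair ends (c.e ia) (c'.e ib) ∧ c.e ia ∉ Set.range c'.e := by
  obtain ⟨k0, h0⟩ := hg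
  obtain ⟨k1, h1⟩ := hx
  obtain ⟨i, hPi, hPn⟩ := cyclic_boundary c.npos (fun k => c.e k ∈ Set.range c'.e) k0 h0 k1 h1
  obtain ⟨ib, hib⟩ := hPi
  refine ⟨i + 1, ib, ⟨?_, c.v (i + 1), ?_, ?_⟩, hPn⟩
  · intro h
    exact hPn (h ▸ ⟨ib, rfl⟩)
  · rw [c.incid]
    exact Sym2.mem_mk_left _ _
  · rw [hib, c.incid]
    exact Sym2.mem_mk_right _ _


/-- if some vertex lies on two distinct cycles, then some pair of
adjacent edges can be removed keeping the graph connected; hence `m(G) ≥ 1`. -/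
theorem removable_pair_of_shared_vertex {V E : Type} [Fintype V] [Fintype E]
    (ends : E → Sym2 V) (hG : ConnOn ends Set.univ)
    (hshared : ∃ (w : V) (c c' : CycleIn ends Set.univ),
      Set.range c.e ≠ Set.range c'.e ∧ (∃ i, c.v i = w) ∧ (∃ j, c'.v j = w)) :
    (∃ e f : E, AdjPair ends e f ∧ ConnOn ends {x | x ≠ e ∧ x ≠ f}) ∧
      1 ≤ maxPairsOn ends Set.univ := by
  classical
  obtain ⟨w, c, c', hne, ⟨i, hi⟩, ⟨j, hj⟩⟩ := hshared
  subst hi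
  have main : ∃ (ca cb : CycleIn ends Set.univ) (ia : ZMod ca.n) (ib : ZMod cb.n),
      AdjPair ends (ca.e ia) (cb.e ib) ∧ ca.e ia ∉ Set.range cb.e := by
    by_cases hdis : ∃ k, c.e k ∈ Set.range c'.e
    · by_cases hsub : ∃ k, c.e k ∉ Set.range c'.e
      · obtain ⟨ia, ib, h⟩ := caseB ends c c' hdis hsub
        exact ⟨c, c', ia, ib, h⟩
      · push_neg at hsub
        have hg' : ∃ k, c'.e k ∈ Set.range c.e := by
          obtain ⟨k0, k', hk'⟩ := hdis
          exact ⟨k', hk' ▸ ⟨k0, rfl⟩⟩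
        have hx' : ∃ k, c'.e k ∉ Set.range c.e := by
          by_contra h
          push_neg at h
          apply hne
          apply Set.eq_of_subset_of_subset
          · rintro x ⟨k, rfl⟩; exact hsub k
          · rintro x ⟨k, rfl⟩; exact h k
        obtain ⟨ia, ib, h⟩ := caseB ends c' c hg' hx'
        exact ⟨c', c, ia, ib, h⟩
    · push_neg at hdis
      refine ⟨c, c', i, j, ⟨?_, c.v i, ?_, ?_⟩, hdis i⟩
      · intro h; exact hdis i (h ▸ ⟨j, rfl⟩)
      · rw [c.incid]; exact Sym2.mem_mk_left _ _
      · rw [c'.incid, ← hj]; exact Sym2.mem_mk_left _ _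
  obtain ⟨ca, cb, ia, ib, hadj, hef⟩ := main
  have hconn := good ends hG ca cb ia ib hef
  refine ⟨⟨ca.e ia, cb.e ib, hadj, hconn⟩, ?_⟩
  have hvalid : ValidOn ends Set.univ ({(ca.e ia, cb.e ib)} : Finset (E × E)) := by
    refine ⟨?_, ?_, ?_⟩
    · intro p hp
      rw [Finset.mem_singleton] at hp
      subst hp
      exact ⟨trivial, trivial, hadj⟩
    · intro p hp q hq hpq
      rw [Finset.mem_singleton] at hp hq
      exact absurd (hp.trans hq.symm) hpq
    · intro a b
      refine reachOn_mono ends ?_ (hconn a b)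
      intro x hx
      refine Set.mem_sep trivial ?_
      intro p hp
      rw [Finset.mem_singleton] at hp
      subst hp
      exact ⟨hx.1, hx.2⟩
  have hbdd : BddAbove {k | ∃ P : Finset (E × E), ValidOn ends Set.univ P ∧ P.card = k} :=
    ⟨Fintype.card (E × E), by rintro k ⟨P, -, rfl⟩; exact P.card_le_univ⟩
  exact le_csSup hbdd ⟨{(ca.e ia, cb.e ib)}, hvalid, Finset.card_singleton _⟩
end

section
/- Let G be a connected multigraph. Any greedy sequence of removals of disjoint pairs of adjacent edges preserving connectivity, continued until no further pair can be removed, terminates with a graph H in which no two distinct cycles share a vertex (i.e., every block of H contains at most one cycle). -/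
section Aux
variable {V E : Type} (ends : E → Sym2 V)

lemma reach_symm {S : Set E} {a b : V} (h : reachOn ends S a b) : reachOn ends S b a := by
  have hsym : Symmetric (fun x y => ∃ e ∈ S, ends e = s(x, y)) := by
    rintro x y ⟨e, he, hxy⟩
    exact ⟨e, he, by rw [hxy, Sym2.eq_swap]⟩
  exact (@Relation.ReflTransGen.stdSymm _ _ ⟨fun a b hab => hsym hab⟩).symm _ _ h

lemma reach_subst {S T : Set E} {a b : V}
    (h : ∀ x y : V, (∃ e ∈ S, ends e = s(x, y)) → reachOn ends T x y)
    (hr : reachOn ends S a b) : reachOn ends T a b := by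
  induction hr with
  | refl => exact Relation.ReflTransGen.refl
  | tail _ hstep ih => exact ih.trans (h _ _ hstep)

lemma cyc_detour {S : Set E} (c : CycleIn ends S) (r : ZMod c.n) (W : Set E)
    (hW : ∀ t : ZMod c.n, t ≠ r → c.e t ∉ W) :
    reachOn ends (S \ W) (c.v (r + 1)) (c.v r) := by
  haveI : NeZero c.n := ⟨c.npos.ne'⟩
  have main : ∀ t : ℕ, t ≤ c.n - 1 →
      reachOn ends (S \ W) (c.v (r + 1)) (c.v (r + 1 + (t : ZMod c.n))) := by
    intro t
    induction t with
    | zero => intro _; simp only [Nat.cast_zero, add_zero]; exact (Relation.ReflTransGen.refl :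
        reachOn ends (S \ W) (c.v (r + 1)) (c.v (r + 1)))
    | succ t ih =>
      intro ht
      have h1 : t ≤ c.n - 1 := by omega
      have hne : (r + 1 + (t : ZMod c.n)) ≠ r := by
        intro h
        have h2 : ((t + 1 : ℕ) : ZMod c.n) = 0 := by
          push_cast
          linear_combination h
        rw [ZMod.natCast_eq_zero_iff] at h2
        have := Nat.le_of_dvd (by omega) h2
        omega
      have hmem : c.e (r + 1 + (t : ZMod c.n)) ∈ S \ W :=
        ⟨c.mem _, hW _ hne⟩
      have step := (ih h1).tail ⟨c.e (r + 1 + (t : ZMod c.n)), hmem, c.incid _⟩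
      have harr : (r + 1 + (t : ZMod c.n)) + 1 = r + 1 + ((t + 1 : ℕ) : ZMod c.n) := by
        push_cast; ring
      rwa [harr] at step
  have hfin := main (c.n - 1) le_rfl
  have : r + 1 + ((c.n - 1 : ℕ) : ZMod c.n) = r := by
    have : ((c.n - 1 : ℕ) : ZMod c.n) + 1 = 0 := by
      have h1 : ((c.n - 1 : ℕ) : ZMod c.n) + 1 = ((c.n - 1 + 1 : ℕ) : ZMod c.n) := by push_cast; ring
      rw [h1, Nat.sub_add_cancel c.npos, ZMod.natCast_self]
    linear_combination this
  rwa [this] at hfin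

lemma key {S : Set E}
    (hconn : ConnOn ends S)
    (hterm : ∀ e f : E, e ∈ S → f ∈ S → AdjPair ends e f → ¬ ConnOn ends (S \ {e, f}))
    (c c' : CycleIn ends S) (i : ZMod c.n) (j : ZMod c'.n)
    (hv : c.v i = c'.v j) (hq : ∃ q : ZMod c'.n, c'.e q ∉ Set.range c.e) : False := by
  classical
  haveI : NeZero c'.n := ⟨c'.npos.ne'⟩
  obtain ⟨q, hqA⟩ := hq
  have hex : ∃ t : ℕ, c'.e (j + (t : ZMod c'.n)) ∉ Set.range c.e := by
    refine ⟨(q - j).val, ?_⟩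
    have : j + (((q - j).val : ℕ) : ZMod c'.n) = q := by
      rw [ZMod.natCast_val, ZMod.cast_id]; ring
    rwa [this]
  set d := Nat.find hex with hd
  have hfd : c'.e (j + (d : ZMod c'.n)) ∉ Set.range c.e := Nat.find_spec hex
  have hr : ∃ r : ZMod c.n, c.v r = c'.v (j + (d : ZMod c'.n)) := by
    rcases Nat.eq_zero_or_pos d with h0 | hpos
    · refine ⟨i, ?_⟩
      rw [hv, h0]; norm_num
    · have hlt : d - 1 < Nat.find hex := by omega
      have hmem : c'.e (j + ((d - 1 : ℕ) : ZMod c'.n)) ∈ Set.range c.e :=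
        not_not.mp (Nat.find_min hex hlt)
      obtain ⟨p, hp⟩ := hmem
      have harr : (j + ((d - 1 : ℕ) : ZMod c'.n)) + 1 = j + (d : ZMod c'.n) := by
        have : ((d - 1 : ℕ) : ZMod c'.n) + 1 = ((d : ℕ) : ZMod c'.n) := by
          have h1 : ((d - 1 : ℕ) : ZMod c'.n) + 1 = ((d - 1 + 1 : ℕ) : ZMod c'.n) := by push_cast; ring
          rw [h1, Nat.sub_add_cancel hpos]
        linear_combination this
      have hy : c'.v (j + (d : ZMod c'.n)) ∈ ends (c.e p) := by
        rw [hp, c'.incid, harr]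
        exact Sym2.mem_mk_right _ _
      rw [c.incid p] at hy
      rcases Sym2.mem_iff.mp hy with h | h
      · exact ⟨p, h.symm⟩
      · exact ⟨p + 1, h.symm⟩
  obtain ⟨r, hry⟩ := hr
  set e := c.e r with hedef
  set f := c'.e (j + (d : ZMod c'.n)) with hfdef
  have heS : e ∈ S := c.mem r
  have hfS : f ∈ S := c'.mem _
  have hef : e ≠ f := fun h => hfd ⟨r, h⟩
  have hadj : AdjPair ends e f := by
    refine ⟨hef, c.v r, ?_, ?_⟩
    · rw [hedef, c.incid]; exact Sym2.mem_mk_left _ _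
    · rw [hry, hfdef, c'.incid]; exact Sym2.mem_mk_left _ _
  have he_re : reachOn ends (S \ {e, f}) (c.v (r + 1)) (c.v r) := by
    apply cyc_detour ends c r
    intro t htr hmem
    rcases Set.mem_insert_iff.mp hmem with h | h
    · exact htr (c.einj h)
    · exact hfd ⟨t, Set.mem_singleton_iff.mp h⟩
  have he_any : ∀ x y : V, ends e = s(x, y) → reachOn ends (S \ {e, f}) x y := by
    intro x y hxy
    rw [hedef, c.incid] at hxy
    rcases Sym2.eq_iff.mp hxy with ⟨h1, h2⟩ | ⟨h1, h2⟩
    · rw [← h1, ← h2]; exact reach_symm ends he_re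
    · rw [← h1, ← h2]; exact he_re
  have hf_re0 : reachOn ends (S \ {f}) (c'.v ((j + (d : ZMod c'.n)) + 1)) (c'.v (j + (d : ZMod c'.n))) := by
    apply cyc_detour ends c'
    intro t ht hm
    exact ht (c'.einj (Set.mem_singleton_iff.mp hm))
  have hf_re : reachOn ends (S \ {e, f}) (c'.v ((j + (d : ZMod c'.n)) + 1)) (c'.v (j + (d : ZMod c'.n))) := by
    apply reach_subst ends ?_ hf_re0
    rintro x y ⟨g, hg, hgxy⟩
    by_cases hge : g = e
    · exact he_any x y (hge ▸ hgxy)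
    · exact Relation.ReflTransGen.single ⟨g, ⟨hg.1, by
        intro hmem
        rcases Set.mem_insert_iff.mp hmem with h | h
        · exact hge h
        · exact hg.2 h⟩, hgxy⟩
  have hf_any : ∀ x y : V, ends f = s(x, y) → reachOn ends (S \ {e, f}) x y := by
    intro x y hxy
    rw [hfdef, c'.incid] at hxy
    rcases Sym2.eq_iff.mp hxy with ⟨h1, h2⟩ | ⟨h1, h2⟩
    · rw [← h1, ← h2]; exact reach_symm ends hf_re
    · rw [← h1, ← h2]; exact hf_re
  have hconn' : ConnOn ends (S \ {e, f}) := by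
    intro a b
    apply reach_subst ends ?_ (hconn a b)
    rintro x y ⟨g, hg, hgxy⟩
    by_cases hge : g = e
    · exact he_any x y (hge ▸ hgxy)
    by_cases hgf : g = f
    · exact hf_any x y (hgf ▸ hgxy)
    · exact Relation.ReflTransGen.single ⟨g, ⟨hg, by
        intro hmem
        rcases Set.mem_insert_iff.mp hmem with h | h
        · exact hge h
        · exact hgf (Set.mem_singleton_iff.mp h)⟩, hgxy⟩
  exact hterm e f heS hfS hadj hconn'

end Aux

/-- any terminated greedy removal sequence ends with a graph in which
no two distinct cycles share a vertex. -/
theorem greedy_terminal_cycles_disjoint {V E : Type} [Fintype V] [Fintype E]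
    (ends : E → Sym2 V) (k : ℕ) (H : Fin (k + 1) → Set E)
    (h0 : H 0 = Set.univ)
    (hconn : ∀ i, ConnOn ends (H i))
    (hstep : ∀ i : Fin k, ∃ e f : E, AdjPair ends e f ∧
      e ∈ H i.castSucc ∧ f ∈ H i.castSucc ∧ H i.succ = H i.castSucc \ {e, f})
    (hterm : ∀ e f : E, e ∈ H (Fin.last k) → f ∈ H (Fin.last k) →
      AdjPair ends e f → ¬ ConnOn ends (H (Fin.last k) \ {e, f})) :
    ∀ c c' : CycleIn ends (H (Fin.last k)),
      Set.range c.e ≠ Set.range c'.e → ∀ i j, c.v i ≠ c'.v j := by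
  intro c c' hne i j hveq
  by_cases hsub : Set.range c'.e ⊆ Set.range c.e
  · have hns : ¬ Set.range c.e ⊆ Set.range c'.e := fun h => hne (le_antisymm h hsub)
    obtain ⟨g, hg1, hg2⟩ := Set.not_subset.mp hns
    obtain ⟨p, rfl⟩ := hg1
    exact key ends (hconn _) hterm c' c j i hveq.symm ⟨p, hg2⟩
  · obtain ⟨g, hg1, hg2⟩ := Set.not_subset.mp hsub
    obtain ⟨p, rfl⟩ := hg1
    exact key ends (hconn _) hterm c c' i j hveq ⟨p, hg2⟩
end

section
/- Let G be a connected multigraph and let T be a spanning tree of G such that every connected component of the cotree G − E(T) has an even number of edges. Then m(G) = β(G)/2, where β(G) is the cycle rank and m(G) is the maximum number of disjoint pairs of adjacent edges removable from G keeping connectivity. -/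
namespace MyAux

variable {V E : Type}

def Sharing (ends : E → Sym2 V) (e f : E) : Prop := ∃ x, x ∈ ends e ∧ x ∈ ends f

lemma Sharing.symm {ends : E → Sym2 V} {e f : E} (h : Sharing ends e f) : Sharing ends f e := by
  obtain ⟨x, h1, h2⟩ := h; exact ⟨x, h2, h1⟩

def Linked (ends : E → Sym2 V) (S : Set E) (e f : E) : Prop :=
  Relation.ReflTransGen (fun a b => a ∈ S ∧ b ∈ S ∧ Sharing ends a b) e f

lemma Linked.refl {ends : E → Sym2 V} {S : Set E} {e : E} : Linked ends S e e :=
  Relation.ReflTransGen.refl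

lemma Linked.trans {ends : E → Sym2 V} {S : Set E} {e f g : E}
    (h1 : Linked ends S e f) (h2 : Linked ends S f g) : Linked ends S e g :=
  Relation.ReflTransGen.trans h1 h2

lemma Linked.symm {ends : E → Sym2 V} {S : Set E} {e f : E}
    (h : Linked ends S e f) : Linked ends S f e := by
  refine @Std.Symm.symm _ _ (@Relation.ReflTransGen.symmetric _ _ ⟨?_⟩) _ _ h
  rintro a b ⟨ha, hb, hs⟩
  exact ⟨hb, ha, hs.symm⟩

lemma Linked.single {ends : E → Sym2 V} {S : Set E} {e f : E}
    (he : e ∈ S) (hf : f ∈ S) (hs : Sharing ends e f) : Linked ends S e f :=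
  Relation.ReflTransGen.single ⟨he, hf, hs⟩

lemma Linked.mono {ends : E → Sym2 V} {S S' : Set E} (hSS : S ⊆ S') {e f : E}
    (h : Linked ends S e f) : Linked ends S' e f := by
  refine Relation.ReflTransGen.mono ?_ _ _ h
  rintro a b ⟨ha, hb, hs⟩
  exact ⟨hSS ha, hSS hb, hs⟩

lemma reachOn_mono {ends : E → Sym2 V} {S S' : Set E} (hSS : S ⊆ S') {a b : V}
    (h : reachOn ends S a b) : reachOn ends S' a b := by
  refine Relation.ReflTransGen.mono ?_ _ _ h
  rintro x y ⟨e, he, hx⟩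
  exact ⟨e, hSS he, hx⟩

lemma reachOn_symm {ends : E → Sym2 V} {S : Set E} {a b : V}
    (h : reachOn ends S a b) : reachOn ends S b a := by
  refine @Std.Symm.symm _ _ (@Relation.ReflTransGen.symmetric _ _ ⟨?_⟩) _ _ h
  rintro x y ⟨e, he, hx⟩
  exact ⟨e, he, by rw [hx, Sym2.eq_swap]⟩

lemma reachOn_equivalence (ends : E → Sym2 V) (S : Set E) : Equivalence (reachOn ends S) :=
  ⟨fun _ => Relation.ReflTransGen.refl, reachOn_symm, Relation.ReflTransGen.trans⟩

lemma reach_of_mem_edge {ends : E → Sym2 V} {S : Set E} {d : E} (hd : d ∈ S) {x y : V}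
    (hx : x ∈ ends d) (hy : y ∈ ends d) : reachOn ends S x y := by
  obtain ⟨⟨a, b⟩, hsym⟩ := Quot.exists_rep (ends d)
  have hsym : ends d = s(a, b) := hsym.symm
  rw [hsym] at hx hy
  · have hab : reachOn ends S a b := Relation.ReflTransGen.single ⟨d, hd, hsym⟩
    rcases Sym2.mem_iff.mp hx with rfl | rfl <;> rcases Sym2.mem_iff.mp hy with rfl | rfl
    · exact Relation.ReflTransGen.refl
    · exact hab
    · exact reachOn_symm hab
    · exact Relation.ReflTransGen.refl

/-- endpoints of linked edges are reachable -/
lemma linked_reach {ends : E → Sym2 V} {S : Set E} {e f : E} (h : Linked ends S e f)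
    (he : e ∈ S) : ∀ x ∈ ends e, ∀ y ∈ ends f, reachOn ends S x y := by
  induction h with
  | refl => exact fun x hx y hy => reach_of_mem_edge he hx hy
  | tail hab hbc ih =>
    obtain ⟨hb, hc, z, hzb, hzc⟩ := hbc
    intro x hx y hy
    exact Relation.ReflTransGen.trans (ih x hx z hzb) (reach_of_mem_edge hc hzc hy)

lemma linked_of_reach {ends : E → Sym2 V} {S : Set E} {b : E} (hb : b ∈ S) {y : V}
    (hy : y ∈ ends b) : ∀ {x : V}, reachOn ends S x y → ∀ a ∈ S, x ∈ ends a → Linked ends S a b := by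
  intro x hreach
  induction hreach using Relation.ReflTransGen.head_induction_on with
  | refl => exact fun a ha hx => Linked.single ha hb ⟨y, hx, hy⟩
  | head h' _ ih =>
    obtain ⟨d, hd, hends⟩ := h'
    intro a ha hx
    refine Linked.trans (Linked.single ha hd ⟨_, hx, by rw [hends]; exact Sym2.mem_mk_left _ _⟩) ?_
    exact ih d hd (by rw [hends]; exact Sym2.mem_mk_right _ _)

/-- restriction of a chain to the class of e -/
lemma linked_in_class {ends : E → Sym2 V} {S : Set E} {e x y : E}
    (hex : Linked ends S e x) (hxy : Linked ends S x y) :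
    Linked ends {f | f ∈ S ∧ Linked ends S e f} x y := by
  induction hxy with
  | refl => exact Linked.refl
  | tail hab hbc ih =>
    obtain ⟨hb, hc, hs⟩ := hbc
    refine Relation.ReflTransGen.tail ih ⟨⟨hb, Linked.trans hex ‹_›⟩, ⟨hc, ?_⟩, hs⟩
    exact Linked.trans hex (Relation.ReflTransGen.tail ‹_› ⟨hb, hc, hs⟩)

/-- first hit lemma -/
lemma linked_first_hit {ends : E → Sym2 V} {S : Set E} {e g : E}
    (h : Linked ends S e g) : e ≠ g →
    ∃ f, f ∈ S ∧ f ≠ g ∧ Linked ends (S \ {g}) e f ∧ Sharing ends f g := by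
  induction h using Relation.ReflTransGen.head_induction_on with
  | refl => exact fun hne => absurd rfl hne
  | @head a c h' hcg ih =>
    intro hne
    obtain ⟨haS, hcS, hs⟩ := h'
    by_cases hc : c = g
    · subst hc
      exact ⟨a, haS, hne, Linked.refl, hs⟩
    · obtain ⟨f, hfS, hfg, hlink, hshare⟩ := ih hc
      exact ⟨f, hfS, hfg, Relation.ReflTransGen.head ⟨⟨haS, hne⟩, ⟨hcS, hc⟩, hs⟩ hlink, hshare⟩

end MyAux

set_option linter.unusedSectionVars false
namespace MyAux

variable {V E : Type} [DecidableEq E]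

def IsPairing (ends : E → Sym2 V) (F : Finset E) (P : Finset (E × E)) : Prop :=
  (∀ p ∈ P, AdjPair ends p.1 p.2) ∧
  (∀ p ∈ P, ∀ q ∈ P, p ≠ q → p.1 ≠ q.1 ∧ p.1 ≠ q.2 ∧ p.2 ≠ q.1 ∧ p.2 ≠ q.2) ∧
  (∀ e, e ∈ F ↔ ∃ p ∈ P, e = p.1 ∨ e = p.2)

lemma IsPairing.empty (ends : E → Sym2 V) : IsPairing ends ∅ ∅ := by
  refine ⟨by simp, by simp, by simp⟩

lemma IsPairing.mem_left {ends : E → Sym2 V} {F : Finset E} {P : Finset (E × E)}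
    (h : IsPairing ends F P) {p : E × E} (hp : p ∈ P) : p.1 ∈ F :=
  (h.2.2 p.1).mpr ⟨p, hp, Or.inl rfl⟩

lemma IsPairing.mem_right {ends : E → Sym2 V} {F : Finset E} {P : Finset (E × E)}
    (h : IsPairing ends F P) {p : E × E} (hp : p ∈ P) : p.2 ∈ F :=
  (h.2.2 p.2).mpr ⟨p, hp, Or.inr rfl⟩

lemma IsPairing.pair {ends : E → Sym2 V} {e f : E} (h : AdjPair ends e f) :
    IsPairing ends {e, f} {(e, f)} := by
  refine ⟨by simpa using h, ?_, by simp⟩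
  intro p hp q hq hpq
  simp only [Finset.mem_singleton] at hp hq
  exact absurd (hp.trans hq.symm) hpq

lemma IsPairing.union {ends : E → Sym2 V} {F1 F2 : Finset E} {P1 P2 : Finset (E × E)}
    (h1 : IsPairing ends F1 P1) (h2 : IsPairing ends F2 P2) (hd : Disjoint F1 F2) :
    IsPairing ends (F1 ∪ F2) (P1 ∪ P2) := by
  classical
  have cross : ∀ p ∈ P1, ∀ q ∈ P2, p.1 ≠ q.1 ∧ p.1 ≠ q.2 ∧ p.2 ≠ q.1 ∧ p.2 ≠ q.2 := by
    intro p hp q hq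
    have hp1 := h1.mem_left hp; have hp2 := h1.mem_right hp
    have hq1 := h2.mem_left hq; have hq2 := h2.mem_right hq
    refine ⟨fun h => Finset.disjoint_left.mp hd hp1 (by rw [h]; exact hq1),
      fun h => Finset.disjoint_left.mp hd hp1 (by rw [h]; exact hq2),
      fun h => Finset.disjoint_left.mp hd hp2 (by rw [h]; exact hq1),
      fun h => Finset.disjoint_left.mp hd hp2 (by rw [h]; exact hq2)⟩
  refine ⟨?_, ?_, ?_⟩
  · intro p hp
    rcases Finset.mem_union.mp hp with h | h
    · exact h1.1 p h
    · exact h2.1 p h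
  · intro p hp q hq hpq
    rcases Finset.mem_union.mp hp with hp' | hp' <;> rcases Finset.mem_union.mp hq with hq' | hq'
    · exact h1.2.1 p hp' q hq' hpq
    · exact cross p hp' q hq'
    · obtain ⟨a, b, c, d⟩ := cross q hq' p hp'
      exact ⟨a.symm, c.symm, b.symm, d.symm⟩
    · exact h2.2.1 p hp' q hq' hpq
  · intro x
    rw [Finset.mem_union, h1.2.2 x, h2.2.2 x]
    constructor
    · rintro (⟨p, hp, h⟩ | ⟨p, hp, h⟩)
      · exact ⟨p, Finset.mem_union_left _ hp, h⟩
      · exact ⟨p, Finset.mem_union_right _ hp, h⟩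
    · rintro ⟨p, hp, h⟩
      rcases Finset.mem_union.mp hp with hp' | hp'
      · exact Or.inl ⟨p, hp', h⟩
      · exact Or.inr ⟨p, hp', h⟩

lemma IsPairing.card {ends : E → Sym2 V} {F : Finset E} {P : Finset (E × E)}
    (h : IsPairing ends F P) : F.card = 2 * P.card := by
  classical
  have hF : F = P.biUnion (fun p => {p.1, p.2}) := by
    ext x
    rw [h.2.2 x, Finset.mem_biUnion]
    simp [Finset.mem_insert]
  rw [hF, Finset.card_biUnion]
  · rw [Finset.sum_congr rfl (fun p hp => Finset.card_pair (h.1 p hp).1), Finset.sum_const,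
      smul_eq_mul, mul_comm]
  · intro p hp q hq hpq
    obtain ⟨a, b, c, d⟩ := h.2.1 p hp q hq hpq
    rw [Function.onFun, Finset.disjoint_left]
    intro x hx hx'
    simp only [Finset.mem_insert, Finset.mem_singleton] at hx hx'
    rcases hx with rfl | rfl <;> rcases hx' with h' | h' <;> simp_all

/-- pairing a set of edges all containing a common vertex -/
lemma pairing_of_common {ends : E → Sym2 V} (x : V) :
    ∀ n (A : Finset E), A.card ≤ n → (∀ e ∈ A, x ∈ ends e) → Even A.card →
      ∃ P, IsPairing ends A P := by
  classical
  intro n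
  induction n with
  | zero =>
    intro A hA _ _
    have : A = ∅ := Finset.card_eq_zero.mp (Nat.le_zero.mp hA)
    exact this ▸ ⟨∅, IsPairing.empty ends⟩
  | succ n ih =>
    intro A hA hmem heven
    rcases A.eq_empty_or_nonempty with rfl | ⟨e, he⟩
    · exact ⟨∅, IsPairing.empty ends⟩
    · have h2 : 2 ≤ A.card := by
        rcases heven with ⟨k, hk⟩
        have : 0 < A.card := Finset.card_pos.mpr ⟨e, he⟩
        omega
      have hne : (A.erase e).Nonempty := by
        rw [← Finset.card_pos, Finset.card_erase_of_mem he]; omega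
      obtain ⟨f, hf⟩ := hne
      have hfe : f ≠ e := Finset.ne_of_mem_erase hf
      have hfA : f ∈ A := Finset.mem_of_mem_erase hf
      set A' := (A.erase e).erase f with hA'
      have hcard : A'.card = A.card - 2 := by
        rw [hA', Finset.card_erase_of_mem hf, Finset.card_erase_of_mem he]; omega
      obtain ⟨P, hP⟩ := ih A' (by omega) (fun a ha => hmem a (Finset.mem_of_mem_erase (Finset.mem_of_mem_erase ha)))
        (by rcases heven with ⟨k, hk⟩; exact ⟨k - 1, by omega⟩)
      have hadj : AdjPair ends e f := ⟨hfe.symm, x, hmem e he, hmem f hfA⟩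
      refine ⟨{(e, f)} ∪ P, ?_⟩
      have hunion := (IsPairing.pair hadj).union hP ?_
      · have : ({e, f} : Finset E) ∪ A' = A := by
          ext y
          simp only [Finset.mem_union, Finset.mem_insert, Finset.mem_singleton, hA',
            Finset.mem_erase]
          constructor
          · rintro ((rfl | rfl) | ⟨_, _, h⟩)
            · exact he
            · exact hfA
            · exact h
          · intro hy
            by_cases h1 : y = e
            · exact Or.inl (Or.inl h1)
            · by_cases h2 : y = f
              · exact Or.inl (Or.inr h2)
              · exact Or.inr ⟨h2, h1, hy⟩
        rwa [this] at hunion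
      · rw [Finset.disjoint_left]
        intro a ha ha'
        simp only [Finset.mem_insert, Finset.mem_singleton] at ha
        rw [hA'] at ha'
        rcases ha with rfl | rfl
        · exact Finset.notMem_erase _ _ (Finset.mem_of_mem_erase ha')
        · exact Finset.notMem_erase _ _ ha'

end MyAux

namespace MyAux

variable {V E : Type} [DecidableEq E]

/-- assembling: pairing of `insert g F'` from leftover data with `Lr` even, `Ls` odd. -/
lemma assemble {ends : E → Sym2 V} {F' : Finset E} {g : E} (hg : g ∉ F')
    {Lr Ls : Finset E} {r s : V} (hrg : r ∈ ends g) (hsg : s ∈ ends g)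
    {P : Finset (E × E)} (hP : IsPairing ends (F' \ (Lr ∪ Ls)) P)
    (hLr : Lr ⊆ F') (hLs : Ls ⊆ F') (hdisj : Disjoint Lr Ls)
    (hr : ∀ l ∈ Lr, r ∈ ends l) (hs : ∀ l ∈ Ls, s ∈ ends l)
    (hLre : Even Lr.card) (hLso : Odd Ls.card) :
    ∃ P', IsPairing ends (insert g F') P' := by
  have hLsne : Ls.Nonempty := by
    rw [← Finset.card_pos]; rcases hLso with ⟨k, hk⟩; omega
  obtain ⟨l0, hl0⟩ := hLsne
  obtain ⟨Pr, hPr⟩ := pairing_of_common r Lr.card Lr le_rfl hr hLre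
  have hcardE : Even (Ls.erase l0).card := by
    rw [Finset.card_erase_of_mem hl0]
    rcases hLso with ⟨k, hk⟩
    exact ⟨k, by omega⟩
  obtain ⟨Ps, hPs⟩ := pairing_of_common s (Ls.erase l0).card (Ls.erase l0) le_rfl
    (fun a ha => hs a (Finset.mem_of_mem_erase ha)) hcardE
  have hadj : AdjPair ends g l0 := ⟨fun h => hg (h ▸ hLs hl0), s, hsg, hs l0 hl0⟩
  have disj1 : Disjoint ({g, l0} : Finset E) (Ls.erase l0) := by
    rw [Finset.disjoint_left]
    rintro a ha ha'
    simp only [Finset.mem_insert, Finset.mem_singleton] at ha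
    rcases ha with rfl | rfl
    · exact hg (hLs (Finset.mem_of_mem_erase ha'))
    · exact Finset.notMem_erase _ _ ha'
  have u1 := (IsPairing.pair hadj).union hPs disj1
  have disj2 : Disjoint (({g, l0} : Finset E) ∪ Ls.erase l0) Lr := by
    rw [Finset.disjoint_left]
    rintro a ha ha'
    simp only [Finset.mem_union, Finset.mem_insert, Finset.mem_singleton] at ha
    rcases ha with (rfl | rfl) | h
    · exact hg (hLr ha')
    · exact Finset.disjoint_left.mp hdisj ha' hl0
    · exact Finset.disjoint_left.mp hdisj ha' (Finset.mem_of_mem_erase h)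
  have u2 := u1.union hPr disj2
  have disj3 : Disjoint ((({g, l0} : Finset E) ∪ Ls.erase l0) ∪ Lr) (F' \ (Lr ∪ Ls)) := by
    rw [Finset.disjoint_left]
    rintro a ha ha'
    rw [Finset.mem_sdiff, Finset.mem_union] at ha'
    simp only [Finset.mem_union, Finset.mem_insert, Finset.mem_singleton] at ha
    rcases ha with ((rfl | rfl) | h) | h
    · exact hg ha'.1
    · exact ha'.2 (Or.inr hl0)
    · exact ha'.2 (Or.inr (Finset.mem_of_mem_erase h))
    · exact ha'.2 (Or.inl h)
  have u3 := u2.union hP disj3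
  have hset : ((({g, l0} : Finset E) ∪ Ls.erase l0) ∪ Lr) ∪ (F' \ (Lr ∪ Ls)) = insert g F' := by
    ext y
    simp only [Finset.mem_union, Finset.mem_insert, Finset.mem_singleton, Finset.mem_erase,
      Finset.mem_sdiff, Finset.mem_union]
    constructor
    · rintro ((((rfl | rfl) | ⟨_, hy⟩) | hy) | ⟨hy, _⟩)
      · exact Or.inl rfl
      · exact Or.inr (hLs hl0)
      · exact Or.inr (hLs hy)
      · exact Or.inr (hLr hy)
      · exact Or.inr hy
    · rintro (rfl | hy)
      · exact Or.inl (Or.inl (Or.inl (Or.inl rfl)))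
      · by_cases h1 : y ∈ Lr
        · exact Or.inl (Or.inr h1)
        · by_cases h2 : y ∈ Ls
          · by_cases h3 : y = l0
            · exact Or.inl (Or.inl (Or.inl (Or.inr h3)))
            · exact Or.inl (Or.inl (Or.inr ⟨h3, h2⟩))
          · exact Or.inr ⟨hy, fun h => by rcases h with h | h <;> [exact h1 h; exact h2 h]⟩
  rw [hset] at u3
  exact ⟨_, u3⟩

end MyAux

namespace MyAux

variable {V E : Type} [DecidableEq E]

def FinalStmt (ends : E → Sym2 V) (n : ℕ) : Prop :=
  ∀ F : Finset E, F.card ≤ n → (∀ e ∈ F, ∀ f ∈ F, Linked ends ↑F e f) →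
    (Even F.card → ∃ P, IsPairing ends F P) ∧
    (∀ r : V, Odd F.card → (∃ e ∈ F, r ∈ ends e) →
      ∃ g ∈ F, r ∈ ends g ∧ ∃ P, IsPairing ends (F.erase g) P)

def KStmt (ends : E → Sym2 V) (n : ℕ) : Prop :=
  ∀ F : Finset E, F.card ≤ n → ∀ g, g ∉ F → (∀ e ∈ F, Linked ends (insert g ↑F) e g) →
  ∀ r s : V, ends g = s(r, s) →
    ∃ P Lr Ls, IsPairing ends (F \ (Lr ∪ Ls)) P ∧ Lr ⊆ F ∧ Ls ⊆ F ∧ Disjoint Lr Ls ∧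
      (∀ l ∈ Lr, r ∈ ends l) ∧ (∀ l ∈ Ls, s ∈ ends l) ∧
      (Even (Lr.card + Ls.card) ↔ Even F.card)

lemma comb (ends : E → Sym2 V) : ∀ n, FinalStmt ends n ∧ KStmt ends n := by
  intro n
  induction n using Nat.strong_induction_on with
  | _ n ih =>
  have hFinal : FinalStmt ends n := by
    intro F hFn hconn
    rcases F.eq_empty_or_nonempty with rfl | ⟨g0, hg0⟩
    · refine ⟨fun _ => ⟨∅, IsPairing.empty ends⟩, fun r hodd _ => ?_⟩
      simp only [Finset.card_empty] at hodd
      exact absurd hodd (by decide)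
    have hn1 : 1 ≤ n := le_trans (Finset.card_pos.mpr ⟨g0, hg0⟩) hFn
    have hK' := (ih (n - 1) (by omega)).2
    have key : ∀ g ∈ F, ∀ r s : V, ends g = s(r, s) →
        ∃ P Lr Ls, IsPairing ends (F.erase g \ (Lr ∪ Ls)) P ∧ Lr ⊆ F.erase g ∧
          Ls ⊆ F.erase g ∧ Disjoint Lr Ls ∧ (∀ l ∈ Lr, r ∈ ends l) ∧ (∀ l ∈ Ls, s ∈ ends l) ∧
          (Even (Lr.card + Ls.card) ↔ Even (F.erase g).card) := by
      intro g hg r s hends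
      have hcard : (F.erase g).card = F.card - 1 := Finset.card_erase_of_mem hg
      refine hK' (F.erase g) (by omega) g (Finset.notMem_erase _ _) ?_ r s hends
      intro e he
      have hins : (insert g ↑(F.erase g) : Set E) = ↑F := by
        rw [← Finset.coe_insert, Finset.insert_erase hg]
      rw [hins]
      exact hconn e (Finset.mem_of_mem_erase he) g hg
    have hFpos : 0 < F.card := Finset.card_pos.mpr ⟨g0, hg0⟩
    constructor
    · -- even case
      intro heven
      obtain ⟨⟨r, s⟩, hends⟩ := Quot.exists_rep (ends g0)
      have hends : ends g0 = s(r, s) := hends.symm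
      obtain ⟨P, Lr, Ls, hP, hLr, hLs, hdisj, hr, hs, hpar⟩ := key g0 hg0 r s hends
      have hcard : (F.erase g0).card = F.card - 1 := Finset.card_erase_of_mem hg0
      have hrg : r ∈ ends g0 := by rw [hends]; exact Sym2.mem_mk_left _ _
      have hsg : s ∈ ends g0 := by rw [hends]; exact Sym2.mem_mk_right _ _
      have hoddsum : ¬ Even (Lr.card + Ls.card) := by
        rw [hpar, hcard, Nat.even_iff]
        rw [Nat.even_iff] at heven
        omega
      have hins : insert g0 (F.erase g0) = F := Finset.insert_erase hg0
      rcases Nat.even_or_odd Lr.card with hLre | hLro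
      · have hLso : Odd Ls.card := by
          rw [Nat.odd_iff]
          rw [Nat.even_iff, Nat.add_mod] at hoddsum
          rw [Nat.even_iff] at hLre
          omega
        obtain ⟨P', hP'⟩ := assemble (Finset.notMem_erase g0 F) hrg hsg hP hLr hLs hdisj
          hr hs hLre hLso
        rw [hins] at hP'
        exact ⟨P', hP'⟩
      · have hLse : Even Ls.card := by
          rw [Nat.even_iff]
          rw [Nat.even_iff, Nat.add_mod] at hoddsum
          rw [Nat.odd_iff] at hLro
          omega
        rw [Finset.union_comm] at hP
        obtain ⟨P', hP'⟩ := assemble (Finset.notMem_erase g0 F) hsg hrg hP hLs hLr hdisj.symm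
          hs hr hLse hLro
        rw [hins] at hP'
        exact ⟨P', hP'⟩
    · -- odd case
      intro r hodd ⟨g, hgF, hrg⟩
      obtain ⟨s, hends⟩ := Sym2.mem_iff_exists.mp hrg
      obtain ⟨P, Lr, Ls, hP, hLr, hLs, hdisj, hr, hs, hpar⟩ := key g hgF r s hends
      have hcard : (F.erase g).card = F.card - 1 := Finset.card_erase_of_mem hgF
      have hsg : s ∈ ends g := by rw [hends]; exact Sym2.mem_mk_right _ _
      have hevensum : Even (Lr.card + Ls.card) := by
        rw [hpar, hcard, Nat.even_iff]
        rw [Nat.odd_iff] at hodd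
        omega
      rcases Nat.even_or_odd Lr.card with hLre | hLro
      · -- both even : leftover is g itself
        have hLse : Even Ls.card := by
          rw [Nat.even_iff] at hevensum hLre ⊢
          rw [Nat.add_mod] at hevensum
          omega
        obtain ⟨Pr, hPr⟩ := pairing_of_common r Lr.card Lr le_rfl hr hLre
        obtain ⟨Ps, hPs⟩ := pairing_of_common s Ls.card Ls le_rfl hs hLse
        have u1 := hPr.union hPs hdisj
        have u2 := u1.union hP (Finset.disjoint_sdiff)
        have hset : (Lr ∪ Ls) ∪ (F.erase g \ (Lr ∪ Ls)) = F.erase g := by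
          apply Finset.union_sdiff_of_subset
          exact Finset.union_subset hLr hLs
        rw [hset] at u2
        exact ⟨g, hgF, hrg, _, u2⟩
      · -- Lr odd, Ls odd : leftover from Lr, pair g on the s side
        have hLso : Odd Ls.card := by
          rw [Nat.even_iff, Nat.add_mod] at hevensum
          rw [Nat.odd_iff] at hLro ⊢
          omega
        have hLrne : Lr.Nonempty := by
          rw [← Finset.card_pos]; rcases hLro with ⟨k, hk⟩; omega
        obtain ⟨lr, hlr⟩ := hLrne
        have hlrF' : lr ∈ F.erase g := hLr hlr
        have hlrF : lr ∈ F := Finset.mem_of_mem_erase hlrF'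
        have hlrg : lr ≠ g := Finset.ne_of_mem_erase hlrF'
        -- restate hP over (F.erase g).erase lr
        have hsets : F.erase g \ (Lr ∪ Ls) = (F.erase g).erase lr \ (Lr.erase lr ∪ Ls) := by
          ext y
          have hcase : y = lr → y ∈ Lr := fun h => h ▸ hlr
          simp only [Finset.mem_sdiff, Finset.mem_union, Finset.mem_erase]
          tauto
        rw [hsets] at hP
        have hgne : g ∉ (F.erase g).erase lr :=
          fun h => Finset.notMem_erase g F (Finset.mem_of_mem_erase h)
        have hLre' : Even (Lr.erase lr).card := by
          rw [Finset.card_erase_of_mem hlr, Nat.even_iff]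
          rw [Nat.odd_iff] at hLro
          omega
        have hLrsub : Lr.erase lr ⊆ (F.erase g).erase lr := by
          intro a ha
          exact Finset.mem_erase.mpr ⟨Finset.ne_of_mem_erase ha, hLr (Finset.mem_of_mem_erase ha)⟩
        have hLssub : Ls ⊆ (F.erase g).erase lr := by
          intro a ha
          refine Finset.mem_erase.mpr ⟨fun h => ?_, hLs ha⟩
          exact Finset.disjoint_left.mp hdisj (h ▸ hlr : lr ∈ Lr) (h ▸ ha) |>.elim
        have hdisj2 : Disjoint (Lr.erase lr) Ls :=
          Finset.disjoint_of_subset_left (Finset.erase_subset _ _) hdisj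
        obtain ⟨P', hP'⟩ := assemble hgne hrg hsg hP hLrsub hLssub hdisj2
          (fun a ha => hr a (Finset.mem_of_mem_erase ha)) hs hLre' hLso
        have hset2 : insert g ((F.erase g).erase lr) = F.erase lr := by
          ext y
          simp only [Finset.mem_insert, Finset.mem_erase]
          constructor
          · rintro (rfl | ⟨h1, h2, h3⟩)
            · exact ⟨Ne.symm hlrg, hgF⟩
            · exact ⟨h1, h3⟩
          · rintro ⟨h1, h2⟩
            by_cases h : y = g
            · exact Or.inl h
            · exact Or.inr ⟨h1, h, h2⟩
        rw [hset2] at hP'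
        exact ⟨lr, hlrF, hr lr hlr, _, hP'⟩
  refine ⟨hFinal, ?_⟩
  -- KStmt
  intro F hFn g hgF hlink r s hends
  rcases F.eq_empty_or_nonempty with rfl | ⟨e0, he0⟩
  · exact ⟨∅, ∅, ∅, by simpa using IsPairing.empty ends, Finset.Subset.refl _,
      Finset.Subset.refl _, Finset.disjoint_empty_left _, by simp, by simp, by simp⟩
  have hn1' : 1 ≤ n := le_trans (Finset.card_pos.mpr ⟨e0, he0⟩) hFn
  classical
  set C := F.filter (fun f => Linked ends ↑F e0 f) with hC
  have he0C : e0 ∈ C := Finset.mem_filter.mpr ⟨he0, Linked.refl⟩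
  have hCF : C ⊆ F := Finset.filter_subset _ _
  have hCset : (↑C : Set E) = {f | f ∈ (↑F : Set E) ∧ Linked ends ↑F e0 f} := by
    ext y; simp [hC]
  have hClinked : ∀ x ∈ C, ∀ y ∈ C, Linked ends ↑C x y := by
    intro x hx y hy
    rw [hC, Finset.mem_filter] at hx hy
    rw [hCset]
    exact linked_in_class hx.2 ((hx.2.symm).trans hy.2)
  have he0ne : e0 ≠ g := fun h => hgF (h ▸ he0)
  have hsetg : (insert g ↑F : Set E) \ {g} = ↑F := by
    rw [Set.insert_diff_of_mem _ (Set.mem_singleton g), Set.diff_singleton_eq_self]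
    exact fun h => hgF (Finset.mem_coe.mp h)
  obtain ⟨f0, hf0S, hf0g, hf0link, hf0share⟩ := linked_first_hit (hlink e0 he0) he0ne
  have hf0F : f0 ∈ F := by
    rcases Set.mem_insert_iff.mp hf0S with h | h
    · exact absurd h hf0g
    · exact Finset.mem_coe.mp h
  have hf0linkF : Linked ends ↑F e0 f0 := by rw [← hsetg]; exact hf0link
  have hf0C : f0 ∈ C := Finset.mem_filter.mpr ⟨hf0F, hf0linkF⟩
  obtain ⟨x0, hx0f0, hx0g⟩ := hf0share
  have hx0 : x0 = r ∨ x0 = s := Sym2.mem_iff.mp (hends ▸ hx0g)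
  set R := F \ C with hR
  have hRF : R ⊆ F := Finset.sdiff_subset
  have hCcard : 0 < C.card := Finset.card_pos.mpr ⟨e0, he0C⟩
  have hRcard : R.card = F.card - C.card := by rw [hR, Finset.card_sdiff_of_subset hCF]
  have hgR : g ∉ R := fun h => hgF (hRF h)
  have hmemC : ∀ h' ∈ F, Linked ends ↑F e0 h' → h' ∈ C :=
    fun h' hh hl => Finset.mem_filter.mpr ⟨hh, hl⟩
  have hclass_sub : ∀ e ∈ R, {f | f ∈ (↑F : Set E) ∧ Linked ends ↑F e f} ⊆ (↑R : Set E) := by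
    intro e he h' hh'
    obtain ⟨hh'F, hh'link⟩ := hh'
    have heR := Finset.mem_sdiff.mp he
    refine Finset.mem_coe.mpr (Finset.mem_sdiff.mpr ⟨Finset.mem_coe.mp hh'F, fun hh'C => ?_⟩)
    exact heR.2 (hmemC e heR.1 ((Finset.mem_filter.mp hh'C).2.trans hh'link.symm))
  have hlinkR : ∀ e ∈ R, Linked ends (insert g ↑R) e g := by
    intro e he
    have heF : e ∈ F := hRF he
    have hene : e ≠ g := fun h => hgF (h ▸ heF)
    obtain ⟨f1, hf1S, hf1g, hf1link, hf1share⟩ := linked_first_hit (hlink e heF) hene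
    have hf1linkF : Linked ends ↑F e f1 := by rw [← hsetg]; exact hf1link
    have hchain := linked_in_class (Linked.refl (e := e)) hf1linkF
    have hchain2 : Linked ends (insert g ↑R) e f1 :=
      (hchain.mono (le_trans (hclass_sub e he) (Set.subset_insert _ _)))
    have hf1R : f1 ∈ (↑R : Set E) := hclass_sub e he ⟨by
      rcases Set.mem_insert_iff.mp hf1S with h | h
      · exact absurd h hf1g
      · exact h, hf1linkF⟩
    exact Relation.ReflTransGen.tail hchain2 ⟨Set.mem_insert_iff.mpr (Or.inr hf1R),
      Set.mem_insert _ _, hf1share⟩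
  have hRn : R.card ≤ n - 1 := by
    rw [hRcard]; have h2 := hCcard; have h3 := hFn; omega
  obtain ⟨P', Lr', Ls', hP', hLr', hLs', hdisj', hr', hs', hpar'⟩ :=
    (ih (n - 1) (by omega : n - 1 < n)).2 R hRn g hgR hlinkR r s hends
  have hFcardsplit : C.card + R.card = F.card := by
    rw [hRcard]
    have := Finset.card_le_card hCF
    omega
  have hLr'F : Lr' ⊆ F := hLr'.trans hRF
  have hLs'F : Ls' ⊆ F := hLs'.trans hRF
  have hdisjCR : ∀ y ∈ C, y ∉ Lr' ∧ y ∉ Ls' := by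
    intro y hy
    constructor
    · intro h; exact (Finset.mem_sdiff.mp (hLr' h)).2 hy
    · intro h; exact (Finset.mem_sdiff.mp (hLs' h)).2 hy
  rcases Nat.even_or_odd C.card with hCe | hCo
  · obtain ⟨PC, hPC⟩ := (hFinal C (le_trans (Finset.card_le_card hCF) hFn) hClinked).1 hCe
    have hseteq : F \ (Lr' ∪ Ls') = C ∪ (R \ (Lr' ∪ Ls')) := by
      ext y
      simp only [Finset.mem_sdiff, Finset.mem_union, Finset.mem_sdiff, hR]
      constructor
      · rintro ⟨hyF, hy⟩
        by_cases hyC : y ∈ C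
        · exact Or.inl hyC
        · exact Or.inr ⟨⟨hyF, hyC⟩, hy⟩
      · rintro (hyC | ⟨⟨hyF, _⟩, hy⟩)
        · obtain ⟨h1, h2⟩ := hdisjCR y hyC
          exact ⟨hCF hyC, fun h => by rcases h with h | h <;> [exact h1 h; exact h2 h]⟩
        · exact ⟨hyF, hy⟩
    have hdisjU : Disjoint C (R \ (Lr' ∪ Ls')) :=
      Finset.disjoint_of_subset_right Finset.sdiff_subset Finset.disjoint_sdiff
    have u := hPC.union hP' hdisjU
    rw [← hseteq] at u
    refine ⟨_, Lr', Ls', u, hLr'F, hLs'F, hdisj', hr', hs', ?_⟩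
    rw [hpar']
    rw [Nat.even_iff, Nat.even_iff] ; rw [Nat.even_iff] at hCe
    omega
  · obtain ⟨g', hg'C, hx0g', PC, hPC⟩ :=
      (hFinal C (le_trans (Finset.card_le_card hCF) hFn) hClinked).2 x0 hCo ⟨f0, hf0C, hx0f0⟩
    have hg'R : g' ∉ R := fun h => (Finset.mem_sdiff.mp h).2 hg'C
    have hg'Lr : g' ∉ Lr' := fun h => hg'R (hLr' h)
    have hg'Ls : g' ∉ Ls' := fun h => hg'R (hLs' h)
    have hseteq : ∀ L2 : Finset E, L2 = Lr' ∪ Ls' →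
        F \ (insert g' (Lr' ∪ Ls')) = (C.erase g') ∪ (R \ (Lr' ∪ Ls')) := by
      intro _ _
      ext y
      simp only [Finset.mem_sdiff, Finset.mem_union, Finset.mem_insert, Finset.mem_erase, hR]
      constructor
      · rintro ⟨hyF, hy⟩
        by_cases hyC : y ∈ C
        · exact Or.inl ⟨fun h => hy (Or.inl h), hyC⟩
        · exact Or.inr ⟨⟨hyF, hyC⟩, fun h => hy (Or.inr h)⟩
      · rintro (⟨hyg', hyC⟩ | ⟨⟨hyF, _⟩, hy⟩)
        · obtain ⟨h1, h2⟩ := hdisjCR y hyC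
          refine ⟨hCF hyC, fun h => ?_⟩
          rcases h with h | h | h
          · exact hyg' h
          · exact h1 h
          · exact h2 h
        · refine ⟨hyF, fun h => ?_⟩
          rcases h with h | h | h
          · exact hg'R (h ▸ (Finset.mem_sdiff.mpr ⟨hyF, ‹_›⟩) : g' ∈ R)
          · exact hy (Or.inl h)
          · exact hy (Or.inr h)
    have hdisjU : Disjoint (C.erase g') (R \ (Lr' ∪ Ls')) :=
      Finset.disjoint_of_subset_right Finset.sdiff_subset
        (Finset.disjoint_of_subset_left (Finset.erase_subset _ _) Finset.disjoint_sdiff)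
    have u := hPC.union hP' hdisjU
    have hcardins : ∀ a : E, a ∉ Lr' ∪ Ls' → (insert a (Lr' ∪ Ls')).card = (Lr' ∪ Ls').card + 1 :=
      fun a ha => Finset.card_insert_of_notMem ha
    have hparC : ¬ Even F.card ↔ Even (R.card) := by
      rw [Nat.even_iff, Nat.even_iff]
      rw [Nat.odd_iff] at hCo
      omega
    rcases hx0 with rfl | rfl
    · -- x0 = r : put g' into Lr'
      refine ⟨PC ∪ P', insert g' Lr', Ls', ?_, Finset.insert_subset (hCF hg'C) hLr'F, hLs'F,
        Finset.disjoint_insert_left.mpr ⟨hg'Ls, hdisj'⟩,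
        fun l hl => by rcases Finset.mem_insert.mp hl with rfl | hl; exacts [hx0g', hr' l hl],
        hs', ?_⟩
      · have : F \ (insert g' Lr' ∪ Ls') = F \ (insert g' (Lr' ∪ Ls')) := by
          rw [Finset.insert_union]
        rw [this, hseteq _ rfl]
        exact u
      · rw [Finset.card_insert_of_notMem hg'Lr]
        rw [Nat.even_iff] at hpar' ⊢
        rw [Nat.even_iff] at *
        rw [Nat.odd_iff] at hCo
        omega
    · -- x0 = s : put g' into Ls'
      refine ⟨PC ∪ P', Lr', insert g' Ls', ?_, hLr'F, Finset.insert_subset (hCF hg'C) hLs'F,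
        Finset.disjoint_insert_right.mpr ⟨hg'Lr, hdisj'⟩,
        hr',
        fun l hl => by rcases Finset.mem_insert.mp hl with rfl | hl; exacts [hx0g', hs' l hl], ?_⟩
      · have : F \ (Lr' ∪ insert g' Ls') = F \ (insert g' (Lr' ∪ Ls')) := by
          rw [Finset.union_insert]
        rw [this, hseteq _ rfl]
        exact u
      · rw [Finset.card_insert_of_notMem hg'Ls]
        rw [Nat.even_iff] at hpar' ⊢
        rw [Nat.even_iff] at *
        rw [Nat.odd_iff] at hCo
        omega

end MyAux

namespace MyAux

variable {V E : Type} [DecidableEq E]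

/-- partition into adjacent pairs when every linkage class is even -/
lemma even_classes_pairing {ends : E → Sym2 V} :
    ∀ n (F : Finset E), F.card ≤ n →
    (∀ e ∈ F, ∀ C : Finset E, (∀ f, f ∈ C ↔ f ∈ F ∧ Linked ends ↑F e f) → Even C.card) →
    ∃ P, IsPairing ends F P := by
  classical
  intro n
  induction n with
  | zero =>
    intro F hF _
    rw [Finset.card_eq_zero.mp (Nat.le_zero.mp hF)]
    exact ⟨∅, IsPairing.empty ends⟩
  | succ n ih =>
    intro F hF heven
    rcases F.eq_empty_or_nonempty with rfl | ⟨e0, he0⟩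
    · exact ⟨∅, IsPairing.empty ends⟩
    set C := F.filter (fun f => Linked ends ↑F e0 f) with hC
    have hCmem : ∀ f, f ∈ C ↔ f ∈ F ∧ Linked ends ↑F e0 f := by
      intro f; rw [hC, Finset.mem_filter]
    have he0C : e0 ∈ C := (hCmem e0).mpr ⟨he0, Linked.refl⟩
    have hCF : C ⊆ F := fun x hx => ((hCmem x).mp hx).1
    have hCset : (↑C : Set E) = {f | f ∈ (↑F : Set E) ∧ Linked ends ↑F e0 f} := by
      ext y; simpa using hCmem y
    have hClinked : ∀ x ∈ C, ∀ y ∈ C, Linked ends ↑C x y := by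
      intro x hx y hy
      rw [hCmem] at hx hy
      rw [hCset]
      exact linked_in_class hx.2 ((hx.2.symm).trans hy.2)
    have hCe : Even C.card := heven e0 he0 C hCmem
    obtain ⟨PC, hPC⟩ := ((comb ends C.card).1 C le_rfl hClinked).1 hCe
    set R := F \ C with hR
    have hRF : R ⊆ F := Finset.sdiff_subset
    have hclass_sub : ∀ e ∈ R, {f | f ∈ (↑F : Set E) ∧ Linked ends ↑F e f} ⊆ (↑R : Set E) := by
      intro e he h' hh'
      obtain ⟨hh'F, hh'link⟩ := hh'
      have heR := Finset.mem_sdiff.mp he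
      refine Finset.mem_coe.mpr (Finset.mem_sdiff.mpr ⟨Finset.mem_coe.mp hh'F, fun hh'C => ?_⟩)
      exact heR.2 ((hCmem e).mpr ⟨heR.1, (((hCmem h').mp hh'C).2).trans hh'link.symm⟩)
    have hlinkiff : ∀ e ∈ R, ∀ f, (f ∈ R ∧ Linked ends ↑R e f) ↔ (f ∈ F ∧ Linked ends ↑F e f) := by
      intro e he f
      constructor
      · rintro ⟨hfR, hl⟩
        exact ⟨hRF hfR, hl.mono (by exact_mod_cast Finset.sdiff_subset : (↑R : Set E) ⊆ ↑F)⟩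
      · rintro ⟨hfF, hl⟩
        have hchain := linked_in_class (Linked.refl (e := e)) hl
        refine ⟨?_, hchain.mono (hclass_sub e he)⟩
        exact Finset.mem_coe.mp (hclass_sub e he ⟨hfF, hl⟩)
    have hevenR : ∀ e ∈ R, ∀ C' : Finset E, (∀ f, f ∈ C' ↔ f ∈ R ∧ Linked ends ↑R e f) →
        Even C'.card := by
      intro e he C' hC'
      refine heven e (hRF he) C' ?_
      intro f
      rw [hC' f, hlinkiff e he f]
    have hcardR : R.card ≤ n := by
      have h1 : C.card ≤ F.card := Finset.card_le_card hCF
      have h2 : 0 < C.card := Finset.card_pos.mpr ⟨e0, he0C⟩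
      have h3 : R.card = F.card - C.card := by rw [hR, Finset.card_sdiff_of_subset hCF]
      omega
    obtain ⟨PR, hPR⟩ := ih R hcardR hevenR
    have hunion := hPC.union hPR Finset.disjoint_sdiff
    rw [Finset.union_sdiff_of_subset hCF] at hunion
    exact ⟨_, hunion⟩

/-- merging one edge decreases the number of classes by at most 1 -/
lemma quot_card_insert {ends : E → Sym2 V} [Finite V] (S : Set E) (a : E) :
    Nat.card (Quot (reachOn ends S)) ≤ Nat.card (Quot (reachOn ends (insert a S))) + 1 := by
  classical
  obtain ⟨⟨x0, y0⟩, ha⟩ := Quot.exists_rep (ends a)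
  have ha : ends a = s(x0, y0) := ha.symm
  have key : ∀ {u v : V}, reachOn ends (insert a S) u v →
      reachOn ends S u v ∨ ((reachOn ends S u x0 ∨ reachOn ends S u y0) ∧
        (reachOn ends S v x0 ∨ reachOn ends S v y0)) := by
    intro u v h
    induction h with
    | refl => exact Or.inl Relation.ReflTransGen.refl
    | @tail b c hub hbc ih =>
      obtain ⟨d, hd, hdends⟩ := hbc
      rcases Set.mem_insert_iff.mp hd with rfl | hdS
      · have hbc' : (b = x0 ∧ c = y0) ∨ (b = y0 ∧ c = x0) := by
          rw [ha] at hdends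
          rcases Sym2.eq_iff.mp hdends with ⟨h1, h2⟩ | ⟨h1, h2⟩
          · exact Or.inl ⟨h1.symm, h2.symm⟩
          · exact Or.inr ⟨h2.symm, h1.symm⟩
        have hbx : reachOn ends S b x0 ∨ reachOn ends S b y0 := by
          rcases hbc' with ⟨rfl, _⟩ | ⟨rfl, _⟩
          · exact Or.inl Relation.ReflTransGen.refl
          · exact Or.inr Relation.ReflTransGen.refl
        have hcx : reachOn ends S c x0 ∨ reachOn ends S c y0 := by
          rcases hbc' with ⟨_, rfl⟩ | ⟨_, rfl⟩
          · exact Or.inr Relation.ReflTransGen.refl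
          · exact Or.inl Relation.ReflTransGen.refl
        rcases ih with ihl | ⟨ihu, _⟩
        · refine Or.inr ⟨?_, hcx⟩
          rcases hbx with h' | h'
          · exact Or.inl (ihl.trans h')
          · exact Or.inr (ihl.trans h')
        · exact Or.inr ⟨ihu, hcx⟩
      · have hstep : reachOn ends S b c := Relation.ReflTransGen.single ⟨d, hdS, hdends⟩
        rcases ih with ihl | ⟨ihu, ihv⟩
        · exact Or.inl (ihl.trans hstep)
        · refine Or.inr ⟨ihu, ?_⟩
          rcases ihv with h' | h'
          · exact Or.inl ((reachOn_symm hstep).trans h')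
          · exact Or.inr ((reachOn_symm hstep).trans h')
  have hwd : ∀ u u' : V, reachOn ends S u u' →
      (if reachOn ends S u y0 then (Sum.inr () : Quot (reachOn ends (insert a S)) ⊕ Unit)
        else Sum.inl (Quot.mk _ u)) =
      (if reachOn ends S u' y0 then Sum.inr () else Sum.inl (Quot.mk _ u')) := by
    intro u u' huu'
    by_cases h1 : reachOn ends S u y0
    · rw [if_pos h1, if_pos (show reachOn ends S u' y0 from (reachOn_symm huu').trans h1)]
    · rw [if_neg h1, if_neg (show ¬ reachOn ends S u' y0 from fun h => h1 (huu'.trans h))]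
      exact congrArg Sum.inl (Quot.sound (reachOn_mono (Set.subset_insert a S) huu'))
  let f : Quot (reachOn ends S) → Quot (reachOn ends (insert a S)) ⊕ Unit :=
    Quot.lift _ hwd
  have hfinj : Function.Injective f := by
    intro q1 q2
    induction q1 using Quot.ind with | _ u =>
    induction q2 using Quot.ind with | _ v =>
    intro h
    have h' : (if reachOn ends S u y0 then (Sum.inr () : Quot (reachOn ends (insert a S)) ⊕ Unit)
        else Sum.inl (Quot.mk _ u)) =
        (if reachOn ends S v y0 then Sum.inr () else Sum.inl (Quot.mk _ v)) := h
    clear h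
    by_cases h1 : reachOn ends S u y0 <;> by_cases h2 : reachOn ends S v y0
    · exact Quot.sound (h1.trans (reachOn_symm h2))
    · rw [if_pos h1, if_neg h2] at h'
      exact absurd h' (by simp)
    · rw [if_neg h1, if_pos h2] at h'
      exact absurd h' (by simp)
    · rw [if_neg h1, if_neg h2] at h'
      have h'' : Quot.mk (reachOn ends (insert a S)) u = Quot.mk (reachOn ends (insert a S)) v := by
        simpa using h'
      have hr : reachOn ends (insert a S) u v :=
        ((reachOn_equivalence ends (insert a S)).eqvGen_iff).mp (Quot.eq.mp h'')
      rcases key hr with h3 | ⟨hu, hv⟩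
      · exact Quot.sound h3
      · have hu' : reachOn ends S u x0 := hu.resolve_right h1
        have hv' : reachOn ends S v x0 := hv.resolve_right h2
        exact Quot.sound (hu'.trans (reachOn_symm hv'))
  have hQfin : Finite (Quot (reachOn ends (insert a S))) :=
    Finite.of_surjective (Quot.mk _) (fun q => Quot.exists_rep q)
  have hle := Nat.card_le_card_of_injective f hfinj
  have hsum : Nat.card (Quot (reachOn ends (insert a S)) ⊕ Unit)
      = Nat.card (Quot (reachOn ends (insert a S))) + 1 := by
    rw [Nat.card_sum]
    simp
  omega

lemma quot_card_le {ends : E → Sym2 V} [Finite V] (S : Finset E) :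
    Nat.card V ≤ Nat.card (Quot (reachOn ends (↑S : Set E))) + S.card := by
  classical
  induction S using Finset.induction_on with
  | empty =>
    have key : ∀ x y : V, reachOn ends (↑(∅ : Finset E) : Set E) x y → x = y := by
      intro x y hxy
      induction hxy with
      | refl => rfl
      | tail _ h ih =>
        obtain ⟨e, he, _⟩ := h
        simp at he
    have hinj : Function.Injective (Quot.mk (reachOn ends (↑(∅ : Finset E) : Set E))) := by
      intro a b h
      have h2 := Quot.eq.mp h
      clear h
      induction h2 with
      | rel _ _ h => exact key _ _ h
      | refl => rfl
      | symm _ _ _ ih => exact ih.symm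
      | trans _ _ _ _ _ ih1 ih2 => exact ih1.trans ih2
    simpa using Nat.card_le_card_of_injective _ hinj
  | @insert a S' haS ih =>
    have hstep := quot_card_insert (ends := ends) (↑S' : Set E) a
    have hco : (↑(insert a S') : Set E) = insert a (↑S' : Set E) := Finset.coe_insert a S'
    rw [hco, Finset.card_insert_of_notMem haS]
    omega

lemma conn_card {ends : E → Sym2 V} [Fintype V] [Nonempty V] (S : Finset E)
    (hconn : ConnOn ends ↑S) : Fintype.card V ≤ S.card + 1 := by
  have h1 := quot_card_le (ends := ends) S
  have hsub : Subsingleton (Quot (reachOn ends (↑S : Set E))) := by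
    constructor
    intro x y
    induction x using Quot.ind with | _ u =>
    induction y using Quot.ind with | _ v =>
    exact Quot.sound (hconn u v)
  have h2 : Nat.card (Quot (reachOn ends (↑S : Set E))) = 1 :=
    @Nat.card_of_subsingleton _ (Quot.mk _ (Classical.arbitrary V)) hsub
  rw [Nat.card_eq_fintype_card] at h1
  omega

end MyAux

namespace MyAux

variable {V E : Type} [DecidableEq E]

lemma classes_even {ends : E → Sym2 V} [Fintype V] [Fintype E] (T : Finset E)
    (heven : oddComp ends ((↑T : Set E)ᶜ) = 0) :
    ∀ e0 ∈ Tᶜ, ∀ C : Finset E,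
      (∀ f, f ∈ C ↔ f ∈ Tᶜ ∧ Linked ends (↑(Tᶜ) : Set E) e0 f) → Even C.card := by
  classical
  intro e0 he0 C hC
  have hTc : (↑(Tᶜ : Finset E) : Set E) = (↑T : Set E)ᶜ := Finset.coe_compl T
  have he0S : e0 ∈ ((↑T : Set E)ᶜ) := by rw [← hTc]; exact he0
  have hv0 : (Quot.out (ends e0)).1 ∈ ends e0 := Sym2.out_fst_mem _
  set v0 := (Quot.out (ends e0)).1 with hv0def
  set c : Quot (reachOn ends ((↑T : Set E)ᶜ)) := Quot.mk _ v0 with hc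
  have hodd : ∀ c' : Quot (reachOn ends ((↑T : Set E)ᶜ)),
      Even (Nat.card {e : E // e ∈ ((↑T : Set E)ᶜ) ∧
        ∀ x ∈ ends e, Quot.mk (reachOn ends ((↑T : Set E)ᶜ)) x = c'}) := by
    intro c'
    by_contra hcon
    rw [Nat.not_even_iff_odd] at hcon
    rw [oddComp] at heven
    rcases Nat.card_eq_zero.mp heven with hempty | hinf
    · exact hempty.elim ⟨c', hcon⟩
    · have : Finite (Quot (reachOn ends ((↑T : Set E)ᶜ))) :=
        Finite.of_surjective (Quot.mk _) (fun q => Quot.exists_rep q)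
      exact absurd hinf (by exact not_infinite_iff_finite.mpr inferInstance)
  have hmem : ∀ f, (f ∈ C) ↔ (f ∈ ((↑T : Set E)ᶜ) ∧
      ∀ x ∈ ends f, Quot.mk (reachOn ends ((↑T : Set E)ᶜ)) x = c) := by
    intro f
    rw [hC f]
    constructor
    · rintro ⟨hfT, hlink⟩
      have hfS : f ∈ ((↑T : Set E)ᶜ) := by rw [← hTc]; exact hfT
      refine ⟨hfS, fun x hx => ?_⟩
      have hlink' : Linked ends ((↑T : Set E)ᶜ) e0 f := by rw [← hTc]; exact hlink
      exact Quot.sound (linked_reach (hlink'.symm) hfS x hx v0 hv0)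
    · rintro ⟨hfS, hall⟩
      have hx : (Quot.out (ends f)).1 ∈ ends f := Sym2.out_fst_mem _
      have hq := hall _ hx
      have hreach : reachOn ends ((↑T : Set E)ᶜ) (Quot.out (ends f)).1 v0 :=
        ((reachOn_equivalence ends _).eqvGen_iff).mp (Quot.eq.mp hq)
      have hlink : Linked ends ((↑T : Set E)ᶜ) f e0 :=
        linked_of_reach he0S hv0 hreach f hfS hx
      refine ⟨by rw [← hTc] at hfS; exact hfS, ?_⟩
      rw [hTc]
      exact hlink.symm
  have hcardeq : C.card = Nat.card {e : E // e ∈ ((↑T : Set E)ᶜ) ∧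
      ∀ x ∈ ends e, Quot.mk (reachOn ends ((↑T : Set E)ᶜ)) x = c} := by
    rw [← Nat.card_eq_finsetCard C]
    exact Nat.card_congr (Equiv.subtypeEquivRight (fun f => hmem f))
  rw [hcardeq]
  exact hodd c

end MyAux


/-- if some spanning tree has a cotree all of whose components have an
even number of edges, then `m(G) = β(G)/2`, stated as `2·m(G) + |V| = |E| + 1`. -/
theorem maxPairs_eq_half_betti_of_even_cotree {V E : Type} [Fintype V] [Fintype E]
    (ends : E → Sym2 V) (hG : ConnOn ends Set.univ) (T : Finset E)
    (hTconn : ConnOn ends (↑T : Set E))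
    (hTcard : T.card + 1 = Fintype.card V)
    (heven : oddComp ends ((↑T : Set E)ᶜ) = 0) :
    2 * maxPairsOn ends Set.univ + Fintype.card V = Fintype.card E + 1 := by
  classical
  have hV : 0 < Fintype.card V := by omega
  have hVne : Nonempty V := Fintype.card_pos_iff.mp hV
  have hcl := MyAux.classes_even (ends := ends) T heven
  obtain ⟨P0, hP0⟩ := MyAux.even_classes_pairing (ends := ends) (Tᶜ : Finset E).card Tᶜ le_rfl
    (fun e he C hC => hcl e he C hC)
  have hcard0 : (Tᶜ : Finset E).card = 2 * P0.card := hP0.card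
  have hcardF : (Tᶜ : Finset E).card = Fintype.card E - T.card := Finset.card_compl T
  have hTle : T.card ≤ Fintype.card E := Finset.card_le_univ T
  have hvalid : ValidOn ends Set.univ P0 := by
    refine ⟨fun p hp => ⟨Set.mem_univ _, Set.mem_univ _, hP0.1 p hp⟩, hP0.2.1, ?_⟩
    intro a b
    refine MyAux.reachOn_mono ?_ (hTconn a b)
    intro t ht
    refine ⟨Set.mem_univ _, fun p hp => ?_⟩
    have h1 : p.1 ∈ (Tᶜ : Finset E) := hP0.mem_left hp
    have h2 : p.2 ∈ (Tᶜ : Finset E) := hP0.mem_right hp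
    constructor
    · rintro rfl
      exact (Finset.mem_compl.mp h1) (Finset.mem_coe.mp ht)
    · rintro rfl
      exact (Finset.mem_compl.mp h2) (Finset.mem_coe.mp ht)
  have hupper : ∀ k ∈ {k | ∃ P : Finset (E × E), ValidOn ends Set.univ P ∧ P.card = k},
      k ≤ P0.card := by
    rintro k ⟨P, hPv, rfl⟩
    set D : Finset E := P.biUnion (fun p => {p.1, p.2}) with hD
    have hDcard : D.card = 2 * P.card := by
      rw [hD, Finset.card_biUnion]
      · rw [Finset.sum_congr rfl (fun p hp => Finset.card_pair (hPv.1 p hp).2.2.1),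
          Finset.sum_const, smul_eq_mul, mul_comm]
      · intro p hp q hq hpq
        obtain ⟨a, b, c, d⟩ := hPv.2.1 p hp q hq hpq
        rw [Function.onFun, Finset.disjoint_left]
        intro x hx hx'
        simp only [Finset.mem_insert, Finset.mem_singleton] at hx hx'
        rcases hx with rfl | rfl <;> rcases hx' with h' | h' <;> simp_all
    have hSrem : (↑(Finset.univ \ D) : Set E) = PairsRemoved Set.univ P := by
      ext x
      simp only [Finset.coe_sdiff, Set.mem_diff, Finset.mem_coe, Finset.mem_univ,
        PairsRemoved, Set.mem_setOf_eq, Set.mem_univ, true_and, Finset.coe_univ]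
      rw [hD]
      simp only [Finset.mem_biUnion, Finset.mem_insert, Finset.mem_singleton]
      constructor
      · intro h p hp
        exact ⟨fun h1 => h ⟨p, hp, Or.inl h1⟩, fun h2 => h ⟨p, hp, Or.inr h2⟩⟩
      · rintro h ⟨p, hp, h1 | h2⟩
        · exact (h p hp).1 h1
        · exact (h p hp).2 h2
    have hconn' : ConnOn ends (↑(Finset.univ \ D) : Set E) := by
      rw [hSrem]; exact hPv.2.2
    have hub := MyAux.conn_card (ends := ends) (Finset.univ \ D) hconn'
    have hSD : (Finset.univ \ D).card = Fintype.card E - D.card := by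
      rw [Finset.card_sdiff_of_subset (Finset.subset_univ D), Finset.card_univ]
    have hDle : D.card ≤ Fintype.card E := Finset.card_le_univ D
    omega
  have hmax : maxPairsOn ends Set.univ = P0.card := by
    apply le_antisymm
    · exact csSup_le ⟨P0.card, P0, hvalid, rfl⟩ hupper
    · exact le_csSup ⟨P0.card, hupper⟩ ⟨P0, hvalid, rfl⟩
  rw [hmax]
  omega
end
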